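/- arXiv:math/0205028 — 2 statements merged into one kernel-verified Lean document; each statement's English description precedes it below -/
import Mathlib

section
/- Let M be a Hölder continuous function on Σ_A taking values in the set of d×d matrices with all entries positive, fix q ∈ ℝ, and let μ_q be the Gibbs measure for M and q (the σ-invariant ergodic probability measure on Σ_A satisfying C₁ ≤ μ_q([J]) / (exp(−n·P(q))·‖M(x)⋯M(σ^{n−1}x)‖^q) ≤ C₂ for all n, J ∈ Σ_{A,n}, x ∈ [J]). Then μ_q is quasi-Bernoulli: there exists C > 0 such that for all n, ℓ ≥ 1 and all I ∈ Σ_{A,n}, J ∈ Σ_{A,ℓ} with IJ ∈ Σ_{A,n+ℓ}: C^{−1} μ_q([I]) μ_q([J]) ≤ μ_q([IJ]) ≤ C μ_q([I]) μ_q([J]). -/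
open Filter MeasureTheory
open scoped Classical BigOperators Topology ENNReal

/-- The left shift on `Σ = {1,…,m}^ℕ`, modelled as `ℕ → Fin m`. -/
def shift {m : ℕ} (x : ℕ → Fin m) : ℕ → Fin m := fun k => x (k + 1)

/-- The subshift of finite type `Σ_A` determined by a 0-1 matrix `A`. -/
def SigmaA {m : ℕ} (A : Matrix (Fin m) (Fin m) ℕ) : Set (ℕ → Fin m) :=
  {x | ∀ k : ℕ, A (x k) (x (k + 1)) = 1}

/-- Admissibility of a word `J ∈ Σ_{A,n}` (a word of length `n` over `{1,…,m}`). -/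
def Adm {m : ℕ} (A : Matrix (Fin m) (Fin m) ℕ) {n : ℕ} (J : Fin n → Fin m) : Prop :=
  ∀ (i : ℕ) (h : i + 1 < n), A (J ⟨i, Nat.lt_of_succ_lt h⟩) (J ⟨i + 1, h⟩) = 1

/-- The (finite) set `Σ_{A,n}` of admissible words of length `n`. -/
noncomputable def admWords {m : ℕ} (A : Matrix (Fin m) (Fin m) ℕ) (n : ℕ) :
    Finset (Fin n → Fin m) :=
  Finset.univ.filter fun J => Adm A J

/-- The cylinder set `[J] ⊆ Σ_A` of a word `J`. -/
def cylinder {m : ℕ} (A : Matrix (Fin m) (Fin m) ℕ) {n : ℕ} (J : Fin n → Fin m) :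
    Set (ℕ → Fin m) :=
  {x | x ∈ SigmaA A ∧ ∀ i : Fin n, x (i : ℕ) = J i}

/-- `‖B‖ = 1ᵗ B 1`, the sum of all entries of `B`. -/
def matNorm {d : ℕ} (B : Matrix (Fin d) (Fin d) ℝ) : ℝ := ∑ i, ∑ j, B i j

/-- The product `M(x) M(σx) ⋯ M(σ^{n-1}x)`. -/
noncomputable def Mprod {m d : ℕ} (M : (ℕ → Fin m) → Matrix (Fin d) (Fin d) ℝ)
    (x : ℕ → Fin m) (n : ℕ) : Matrix (Fin d) (Fin d) ℝ :=
  (((List.range n).map fun i => M (shift^[i] x))).prod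

/-- `s_n(J,q) = sup_{x ∈ [J]} ‖M(x)⋯M(σ^{n-1}x)‖^q`. -/
noncomputable def sWord {m d : ℕ} (A : Matrix (Fin m) (Fin m) ℕ)
    (M : (ℕ → Fin m) → Matrix (Fin d) (Fin d) ℝ) (q : ℝ) {n : ℕ} (J : Fin n → Fin m) : ℝ :=
  sSup ((fun x => matNorm (Mprod M x n) ^ q) '' cylinder A J)

/-- `s_n(q) = Σ_{J ∈ Σ_{A,n}} s_n(J,q)`. -/
noncomputable def sSum {m d : ℕ} (A : Matrix (Fin m) (Fin m) ℕ)
    (M : (ℕ → Fin m) → Matrix (Fin d) (Fin d) ℝ) (q : ℝ) (n : ℕ) : ℝ :=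
  ∑ J ∈ admWords A n, sWord A M q J

/-- `M` is Hölder continuous on `Σ_A` with respect to the metric `d(x,y) = m^{-n(x,y)}`:
entrywise, `|M(x)_{ij} - M(y)_{ij}| ≤ C (m^{-α})^n` whenever `x, y` agree on the first
`n` coordinates. -/
def HolderM {m d : ℕ} (A : Matrix (Fin m) (Fin m) ℕ)
    (M : (ℕ → Fin m) → Matrix (Fin d) (Fin d) ℝ) : Prop :=
  ∃ C > (0:ℝ), ∃ a : ℝ, 0 < a ∧ a < 1 ∧
    ∀ x ∈ SigmaA A, ∀ y ∈ SigmaA A, ∀ n : ℕ, (∀ k < n, x k = y k) →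
      ∀ i j, |M x i j - M y i j| ≤ C * a ^ n

/-- `A` is a 0-1 matrix. -/
def ZeroOne {m : ℕ} (A : Matrix (Fin m) (Fin m) ℕ) : Prop :=
  ∀ i j, A i j = 0 ∨ A i j = 1

/-- `A` is primitive: some power of `A` has all entries positive. -/
def Primitive {m : ℕ} (A : Matrix (Fin m) (Fin m) ℕ) : Prop :=
  ∃ p : ℕ, 1 ≤ p ∧ ∀ i j, 0 < (A ^ p) i j

/-- `M` takes values in the positive `d × d` matrices (on `Σ_A`). -/
def PosM {m d : ℕ} (A : Matrix (Fin m) (Fin m) ℕ)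
    (M : (ℕ → Fin m) → Matrix (Fin d) (Fin d) ℝ) : Prop :=
  ∀ x ∈ SigmaA A, ∀ i j, 0 < M x i j

lemma shift_iterate_apply {m : ℕ} (x : ℕ → Fin m) (n k : ℕ) : shift^[n] x k = x (k + n) := by
  induction n generalizing x k with
  | zero => rfl
  | succ n ih =>
    rw [Function.iterate_succ_apply, ih]
    show x (k + n + 1) = x (k + (n + 1))
    rw [Nat.add_assoc]

lemma shift_iterate_mem {m : ℕ} {A : Matrix (Fin m) (Fin m) ℕ} {x : ℕ → Fin m}
    (hx : x ∈ SigmaA A) (n : ℕ) : shift^[n] x ∈ SigmaA A := by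
  intro k
  rw [shift_iterate_apply, shift_iterate_apply]
  have : k + 1 + n = k + n + 1 := by omega
  rw [this]
  exact hx (k + n)

lemma Mprod_add {m d : ℕ} (M : (ℕ → Fin m) → Matrix (Fin d) (Fin d) ℝ)
    (x : ℕ → Fin m) (n ℓ : ℕ) :
    Mprod M x (n + ℓ) = Mprod M x n * Mprod M (shift^[n] x) ℓ := by
  unfold Mprod
  rw [List.range_add, List.map_append, List.prod_append, List.map_map]
  have : ((fun i => M (shift^[i] x)) ∘ fun x => n + x) = fun i => M (shift^[i] (shift^[n] x)) := by
    funext i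
    simp only [Function.comp_apply]
    rw [Nat.add_comm n i, Function.iterate_add_apply]
  rw [this]

lemma Mprod_succ {m d : ℕ} (M : (ℕ → Fin m) → Matrix (Fin d) (Fin d) ℝ)
    (x : ℕ → Fin m) (n : ℕ) :
    Mprod M x (n + 1) = Mprod M x n * M (shift^[n] x) := by
  unfold Mprod
  rw [List.range_succ, List.map_append, List.prod_append]
  simp

lemma Mprod_one {m d : ℕ} (M : (ℕ → Fin m) → Matrix (Fin d) (Fin d) ℝ) (x : ℕ → Fin m) :
    Mprod M x 1 = M x := by
  show (List.prod [M (shift^[0] x)]) = M x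
  simp

lemma matNorm_mul_eq {d : ℕ} (B C : Matrix (Fin d) (Fin d) ℝ) :
    matNorm (B * C) = ∑ j, (∑ i, B i j) * (∑ k, C j k) := by
  calc matNorm (B * C) = ∑ i, ∑ k, ∑ j, B i j * C j k := by
        unfold matNorm
        simp only [Matrix.mul_apply]
    _ = ∑ i, ∑ j, ∑ k, B i j * C j k := by
        exact Finset.sum_congr rfl fun i _ => Finset.sum_comm
    _ = ∑ j, ∑ i, ∑ k, B i j * C j k := Finset.sum_comm
    _ = ∑ j, (∑ i, B i j) * (∑ k, C j k) := by
        refine Finset.sum_congr rfl fun j _ => ?_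
        rw [Finset.sum_mul]
        exact Finset.sum_congr rfl fun i _ => (Finset.mul_sum _ _ _).symm

/-- Key norm comparison: if `B, C` have nonnegative entries and the rows of `C` are
`κ`-comparable, then `(κ d)⁻¹ ‖B‖ ‖C‖ ≤ ‖B C‖ ≤ ‖B‖ ‖C‖`. -/
lemma matNorm_mul_bounds {d : ℕ} (hd : 1 ≤ d) {κ : ℝ} (hκ : 0 < κ)
    (B C : Matrix (Fin d) (Fin d) ℝ)
    (hB : ∀ i j, 0 ≤ B i j) (hC : ∀ j k, 0 ≤ C j k)
    (hrow : ∀ j j' k, C j k ≤ κ * C j' k) :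
    (κ * d)⁻¹ * (matNorm B * matNorm C) ≤ matNorm (B * C) ∧
      matNorm (B * C) ≤ matNorm B * matNorm C := by
  have hBcol : ∀ j, 0 ≤ ∑ i, B i j := fun j => Finset.sum_nonneg fun i _ => hB i j
  have hCrow : ∀ j, 0 ≤ ∑ k, C j k := fun j => Finset.sum_nonneg fun k _ => hC j k
  have hnormC : matNorm C = ∑ j, ∑ k, C j k := rfl
  have hnormB : matNorm B = ∑ j, ∑ i, B i j := by
    unfold matNorm; rw [Finset.sum_comm]
  constructor
  · -- lower bound
    rw [matNorm_mul_eq]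
    -- each row sum of C is ≥ (κ d)⁻¹ ‖C‖
    have hrowlb : ∀ j : Fin d, (κ * d)⁻¹ * matNorm C ≤ ∑ k, C j k := by
      intro j
      rw [inv_mul_le_iff₀ (by positivity)]
      rw [hnormC]
      calc ∑ j', ∑ k, C j' k ≤ ∑ j' : Fin d, κ * ∑ k, C j k := by
            apply Finset.sum_le_sum
            intro j' _
            rw [Finset.mul_sum]
            exact Finset.sum_le_sum fun k _ => hrow j' j k
        _ = κ * d * ∑ k, C j k := by
            rw [Finset.sum_const, Finset.card_univ, Fintype.card_fin]
            ring
    calc (κ * d)⁻¹ * (matNorm B * matNorm C)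
        = ∑ j, (∑ i, B i j) * ((κ * d)⁻¹ * matNorm C) := by
          rw [← Finset.sum_mul, ← hnormB]; ring
      _ ≤ ∑ j, (∑ i, B i j) * (∑ k, C j k) := by
          apply Finset.sum_le_sum
          intro j _
          exact mul_le_mul_of_nonneg_left (hrowlb j) (hBcol j)
  · rw [matNorm_mul_eq]
    calc ∑ j, (∑ i, B i j) * (∑ k, C j k)
        ≤ ∑ j, (∑ i, B i j) * matNorm C := by
          apply Finset.sum_le_sum
          intro j _
          apply mul_le_mul_of_nonneg_left _ (hBcol j)
          rw [hnormC]
          exact Finset.single_le_sum (fun j' _ => hCrow j') (Finset.mem_univ j)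
      _ = matNorm B * matNorm C := by rw [← Finset.sum_mul, ← hnormB]

lemma Mprod_nonneg {m d : ℕ} {A : Matrix (Fin m) (Fin m) ℕ}
    {M : (ℕ → Fin m) → Matrix (Fin d) (Fin d) ℝ} (hpos : PosM A M)
    {x : ℕ → Fin m} (hx : x ∈ SigmaA A) (n : ℕ) :
    ∀ i j, 0 ≤ Mprod M x n i j := by
  induction n with
  | zero =>
    intro i j
    show (0:ℝ) ≤ (1 : Matrix (Fin d) (Fin d) ℝ) i j
    rw [Matrix.one_apply]
    split <;> norm_num
  | succ n ih =>
    intro i j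
    rw [Mprod_succ]
    rw [Matrix.mul_apply]
    apply Finset.sum_nonneg
    intro k _
    exact mul_nonneg (ih i k) (le_of_lt (hpos _ (shift_iterate_mem hx n) k j))

lemma Mprod_pos {m d : ℕ} (hd : 1 ≤ d) {A : Matrix (Fin m) (Fin m) ℕ}
    {M : (ℕ → Fin m) → Matrix (Fin d) (Fin d) ℝ} (hpos : PosM A M)
    {x : ℕ → Fin m} (hx : x ∈ SigmaA A) {n : ℕ} (hn : 1 ≤ n) :
    ∀ i j, 0 < Mprod M x n i j := by
  induction n with
  | zero => omega
  | succ n ih =>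
    intro i j
    rw [Mprod_succ, Matrix.mul_apply]
    rcases Nat.eq_zero_or_pos n with h0 | h1
    · subst h0
      have : Mprod M x 0 = 1 := rfl
      apply Finset.sum_pos'
      · intro k _
        exact mul_nonneg (Mprod_nonneg hpos hx 0 i k)
          (le_of_lt (hpos _ (shift_iterate_mem hx 0) k j))
      · refine ⟨i, Finset.mem_univ i, ?_⟩
        rw [this]
        simp [Matrix.one_apply]
        exact hpos _ (shift_iterate_mem hx 0) i j
    · apply Finset.sum_pos
      · intro k _
        exact mul_pos (ih h1 i k) (hpos _ (shift_iterate_mem hx n) k j)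
      · exact ⟨⟨0, hd⟩, Finset.mem_univ _⟩

lemma matNorm_pos {m d : ℕ} (hd : 1 ≤ d) {A : Matrix (Fin m) (Fin m) ℕ}
    {M : (ℕ → Fin m) → Matrix (Fin d) (Fin d) ℝ} (hpos : PosM A M)
    {x : ℕ → Fin m} (hx : x ∈ SigmaA A) {n : ℕ} (hn : 1 ≤ n) :
    0 < matNorm (Mprod M x n) := by
  unfold matNorm
  have hne : Finset.univ.Nonempty := ⟨(⟨0, hd⟩ : Fin d), Finset.mem_univ _⟩
  apply Finset.sum_pos _ hne
  intro i _
  exact Finset.sum_pos (fun j _ => Mprod_pos hd hpos hx hn i j) hne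

/-- Rows of `Mprod M y ℓ` (for `ℓ ≥ 1`) are `Δ/δ`-comparable, where
`δ ≤ M(·) ≤ Δ` on `Σ_A`. -/
lemma Mprod_row_comparable {m d : ℕ} (hd : 1 ≤ d) {A : Matrix (Fin m) (Fin m) ℕ}
    {M : (ℕ → Fin m) → Matrix (Fin d) (Fin d) ℝ} (hpos : PosM A M)
    {δ Δ : ℝ} (hδ : 0 < δ)
    (hbd : ∀ y ∈ SigmaA A, ∀ i j, δ ≤ M y i j ∧ M y i j ≤ Δ)
    {y : ℕ → Fin m} (hy : y ∈ SigmaA A) {ℓ : ℕ} (hℓ : 1 ≤ ℓ) :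
    ∀ j j' k, Mprod M y ℓ j k ≤ (Δ / δ) * Mprod M y ℓ j' k := by
  obtain ⟨ℓ', rfl⟩ : ∃ ℓ', ℓ = 1 + ℓ' := ⟨ℓ - 1, by omega⟩
  intro j j' k
  rw [Mprod_add, Mprod_one]
  set R := Mprod M (shift^[1] y) ℓ' with hR
  have hRnn : ∀ t k, 0 ≤ R t k := Mprod_nonneg hpos (shift_iterate_mem hy 1) ℓ'
  rw [Matrix.mul_apply, Matrix.mul_apply]
  have hRsum : 0 ≤ ∑ t, R t k := Finset.sum_nonneg fun t _ => hRnn t k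
  calc ∑ t, M y j t * R t k ≤ ∑ t, Δ * R t k := by
        apply Finset.sum_le_sum
        intro t _
        exact mul_le_mul_of_nonneg_right (hbd y hy j t).2 (hRnn t k)
    _ = (Δ / δ) * ∑ t, δ * R t k := by
        rw [Finset.mul_sum]
        apply Finset.sum_congr rfl
        intro t _
        field_simp
    _ ≤ (Δ / δ) * ∑ t, M y j' t * R t k := by
        have hΔpos : (0:ℝ) < Δ := lt_of_lt_of_le hδ
          (le_trans (hbd y hy ⟨0, hd⟩ ⟨0, hd⟩).1 (hbd y hy ⟨0, hd⟩ ⟨0, hd⟩).2)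
        apply mul_le_mul_of_nonneg_left _ (by positivity)
        apply Finset.sum_le_sum
        intro t _
        exact mul_le_mul_of_nonneg_right (hbd y hy j' t).1 (hRnn t k)

lemma isClosed_SigmaA {m : ℕ} (A : Matrix (Fin m) (Fin m) ℕ) : IsClosed (SigmaA A) := by
  have : SigmaA A = ⋂ k : ℕ, {x : ℕ → Fin m | A (x k) (x (k+1)) = 1} := by
    ext x; simp [SigmaA, Set.mem_iInter]
  rw [this]
  apply isClosed_iInter
  intro k
  have hc : Continuous fun x : ℕ → Fin m => A (x k) (x (k+1)) := by
    have h1 : Continuous fun x : ℕ → Fin m => (x k, x (k+1)) :=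
      (continuous_apply k).prodMk (continuous_apply (k+1))
    exact (continuous_of_discreteTopology (f := fun p : Fin m × Fin m => A p.1 p.2)).comp h1
  exact isClosed_eq hc continuous_const

lemma isCompact_SigmaA {m : ℕ} (A : Matrix (Fin m) (Fin m) ℕ) : IsCompact (SigmaA A) :=
  (isClosed_SigmaA A).isCompact

lemma continuousOn_entry {m d : ℕ} {A : Matrix (Fin m) (Fin m) ℕ}
    {M : (ℕ → Fin m) → Matrix (Fin d) (Fin d) ℝ} (hHolder : HolderM A M) (i j : Fin d) :
    ContinuousOn (fun y => M y i j) (SigmaA A) := by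
  obtain ⟨C, hC, a, ha0, ha1, hH⟩ := hHolder
  intro x hx
  rw [ContinuousWithinAt, Metric.tendsto_nhds]
  intro ε hε
  -- choose n with C * a^n < ε
  obtain ⟨n, hn⟩ : ∃ n : ℕ, C * a ^ n < ε := by
    have h := tendsto_pow_atTop_nhds_zero_of_lt_one ha0.le ha1
    have h2 : Tendsto (fun n : ℕ => C * a ^ n) atTop (𝓝 (C * 0)) := h.const_mul C
    rw [mul_zero] at h2
    have := (h2.eventually (eventually_lt_nhds hε)).exists
    exact this
  have hU : ∀ᶠ y in 𝓝[SigmaA A] x, (∀ k < n, y k = x k) ∧ y ∈ SigmaA A := by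
    apply Filter.eventually_inf_principal.2
    have hopen : IsOpen {y : ℕ → Fin m | ∀ k < n, y k = x k} := by
      have : {y : ℕ → Fin m | ∀ k < n, y k = x k} = ⋂ k ∈ Finset.range n, {y | y k = x k} := by
        ext y; simp
      rw [this]
      apply Set.Finite.isOpen_biInter (Finset.finite_toSet _)
      intro k _
      have : {y : ℕ → Fin m | y k = x k} = (fun y : ℕ → Fin m => y k) ⁻¹' {x k} := rfl
      rw [this]
      exact (continuous_apply k).isOpen_preimage _ (isOpen_discrete _)
    filter_upwards [hopen.mem_nhds (by simp : x ∈ {y : ℕ → Fin m | ∀ k < n, y k = x k})]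
      with y hy hy2
    exact ⟨hy, hy2⟩
  filter_upwards [hU] with y ⟨hyx, hyA⟩
  rw [Real.dist_eq]
  calc |M y i j - M x i j| ≤ C * a ^ n := hH y hyA x hx n hyx i j
    _ < ε := hn

/-- Uniform entry bounds on the compact set `Σ_A`. -/
lemma entry_bounds {m d : ℕ} (hd : 1 ≤ d) {A : Matrix (Fin m) (Fin m) ℕ}
    {M : (ℕ → Fin m) → Matrix (Fin d) (Fin d) ℝ}
    (hpos : PosM A M) (hHolder : HolderM A M) (hne : (SigmaA A).Nonempty) :
    ∃ δ > (0:ℝ), ∃ Δ : ℝ, ∀ y ∈ SigmaA A, ∀ i j, δ ≤ M y i j ∧ M y i j ≤ Δ := by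
  have hK := isCompact_SigmaA A
  have hmin : ∀ p : Fin d × Fin d, ∃ δp > (0:ℝ), ∀ y ∈ SigmaA A, δp ≤ M y p.1 p.2 := by
    intro p
    obtain ⟨z, hz, hzmin⟩ := hK.exists_isMinOn hne (continuousOn_entry hHolder p.1 p.2)
    exact ⟨M z p.1 p.2, hpos z hz p.1 p.2, fun y hy => hzmin hy⟩
  have hmax : ∀ p : Fin d × Fin d, ∃ Δp : ℝ, ∀ y ∈ SigmaA A, M y p.1 p.2 ≤ Δp := by
    intro p
    obtain ⟨z, hz, hzmax⟩ := hK.exists_isMaxOn hne (continuousOn_entry hHolder p.1 p.2)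
    exact ⟨M z p.1 p.2, fun y hy => hzmax hy⟩
  choose δf hδf hδfle using hmin
  choose Δf hΔfle using hmax
  have hne' : (Finset.univ : Finset (Fin d × Fin d)).Nonempty := by
    refine ⟨(⟨0, hd⟩, ⟨0, hd⟩), Finset.mem_univ _⟩
  refine ⟨Finset.univ.inf' hne' δf, ?_, Finset.univ.sup' hne' Δf, ?_⟩
  · simp only [gt_iff_lt, Finset.lt_inf'_iff]
    intro p _
    exact hδf p
  · intro y hy i j
    constructor
    · exact le_trans (Finset.inf'_le δf (Finset.mem_univ (i, j))) (hδfle (i,j) y hy)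
    · exact le_trans (hΔfle (i,j) y hy) (Finset.le_sup' Δf (Finset.mem_univ (i,j)))

/-- From primitivity: every symbol has an admissible successor. -/
lemma exists_successor {m : ℕ} {A : Matrix (Fin m) (Fin m) ℕ} (hA01 : ZeroOne A)
    (hAprim : Primitive A) : ∀ i : Fin m, ∃ j : Fin m, A i j = 1 := by
  intro i
  by_contra h
  push_neg at h
  have hrow : ∀ j, A i j = 0 := by
    intro j
    rcases hA01 i j with h0 | h1
    · exact h0
    · exact absurd h1 (h j)
  obtain ⟨p, hp1, hpos⟩ := hAprim
  obtain ⟨p', rfl⟩ : ∃ p', p = p' + 1 := ⟨p - 1, by omega⟩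
  have hzero : ∀ j, (A ^ (p' + 1)) i j = 0 := by
    intro j
    rw [pow_succ']
    rw [Matrix.mul_apply]
    apply Finset.sum_eq_zero
    intro k _
    rw [hrow k, zero_mul]
  rcases Nat.eq_zero_or_pos m with hm0 | hm1
  · exact absurd i.2 (by omega)
  · have := hpos i ⟨0, hm1⟩
    rw [hzero ⟨0, hm1⟩] at this
    exact lt_irrefl 0 this

/-- Extend an admissible word to an infinite sequence using a successor function. -/
def extendWord {m : ℕ} (f : Fin m → Fin m) {N : ℕ} (W : Fin N → Fin m) (hN : 0 < N) :
    ℕ → Fin m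
  | 0 => W ⟨0, hN⟩
  | k + 1 => if h : k + 1 < N then W ⟨k + 1, h⟩ else f (extendWord f W hN k)

lemma extendWord_eq {m : ℕ} (f : Fin m → Fin m) {N : ℕ} (W : Fin N → Fin m) (hN : 0 < N)
    (k : ℕ) (h : k < N) : extendWord f W hN k = W ⟨k, h⟩ := by
  cases k with
  | zero => rfl
  | succ k => exact dif_pos h

lemma extendWord_mem {m : ℕ} {A : Matrix (Fin m) (Fin m) ℕ} {f : Fin m → Fin m}
    (hf : ∀ i, A i (f i) = 1) {N : ℕ} {W : Fin N → Fin m} (hN : 0 < N) (hW : Adm A W) :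
    extendWord f W hN ∈ SigmaA A := by
  intro k
  by_cases h : k + 1 < N
  · rw [extendWord_eq f W hN k (Nat.lt_of_succ_lt h), extendWord_eq f W hN (k+1) h]
    exact hW k h
  · have : extendWord f W hN (k + 1) = f (extendWord f W hN k) := dif_neg h
    rw [this]
    exact hf _

lemma extendWord_mem_cylinder {m : ℕ} {A : Matrix (Fin m) (Fin m) ℕ} {f : Fin m → Fin m}
    (hf : ∀ i, A i (f i) = 1) {N : ℕ} {W : Fin N → Fin m} (hN : 0 < N) (hW : Adm A W) :
    extendWord f W hN ∈ cylinder A W :=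
  ⟨extendWord_mem hf hN hW, fun i => extendWord_eq f W hN i i.2⟩

/-- `Adm` of an appended word restricts to the first word. -/
lemma adm_append_left {m n ℓ : ℕ} {A : Matrix (Fin m) (Fin m) ℕ}
    {I : Fin n → Fin m} {J : Fin ℓ → Fin m} (h : Adm A (Fin.append I J)) : Adm A I := by
  intro i hi
  have h1 : i + 1 < n + ℓ := by omega
  have := h i h1
  have e1 : Fin.append I J ⟨i, Nat.lt_of_succ_lt h1⟩ = I ⟨i, Nat.lt_of_succ_lt hi⟩ := by
    have : (⟨i, Nat.lt_of_succ_lt h1⟩ : Fin (n + ℓ)) =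
        Fin.castAdd ℓ ⟨i, Nat.lt_of_succ_lt hi⟩ := rfl
    rw [this, Fin.append_left]
  have e2 : Fin.append I J ⟨i + 1, h1⟩ = I ⟨i + 1, hi⟩ := by
    have : (⟨i + 1, h1⟩ : Fin (n + ℓ)) = Fin.castAdd ℓ ⟨i + 1, hi⟩ := rfl
    rw [this, Fin.append_left]
  rw [e1, e2] at this
  exact this

lemma adm_append_right {m n ℓ : ℕ} {A : Matrix (Fin m) (Fin m) ℕ}
    {I : Fin n → Fin m} {J : Fin ℓ → Fin m} (h : Adm A (Fin.append I J)) : Adm A J := by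
  intro i hi
  have h1 : (n + i) + 1 < n + ℓ := by omega
  have := h (n + i) h1
  have e1 : Fin.append I J ⟨n + i, Nat.lt_of_succ_lt h1⟩ = J ⟨i, Nat.lt_of_succ_lt hi⟩ := by
    have : (⟨n + i, Nat.lt_of_succ_lt h1⟩ : Fin (n + ℓ)) =
        Fin.natAdd n ⟨i, Nat.lt_of_succ_lt hi⟩ := rfl
    rw [this, Fin.append_right]
  have e2 : Fin.append I J ⟨(n + i) + 1, h1⟩ = J ⟨i + 1, hi⟩ := by
    have : (⟨(n + i) + 1, h1⟩ : Fin (n + ℓ)) = Fin.natAdd n ⟨i + 1, hi⟩ := by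
      apply Fin.ext
      show (n + i) + 1 = n + (i + 1)
      omega
    rw [this, Fin.append_right]
  rw [e1, e2] at this
  exact this

lemma mem_cylinder_append_left {m n ℓ : ℕ} {A : Matrix (Fin m) (Fin m) ℕ}
    {I : Fin n → Fin m} {J : Fin ℓ → Fin m} {x : ℕ → Fin m}
    (hx : x ∈ cylinder A (Fin.append I J)) : x ∈ cylinder A I := by
  refine ⟨hx.1, fun i => ?_⟩
  have := hx.2 (Fin.castAdd ℓ i)
  rw [Fin.append_left] at this
  exact this

lemma mem_cylinder_append_right {m n ℓ : ℕ} {A : Matrix (Fin m) (Fin m) ℕ}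
    {I : Fin n → Fin m} {J : Fin ℓ → Fin m} {x : ℕ → Fin m}
    (hx : x ∈ cylinder A (Fin.append I J)) : shift^[n] x ∈ cylinder A J := by
  refine ⟨shift_iterate_mem hx.1 n, fun i => ?_⟩
  rw [shift_iterate_apply]
  have := hx.2 (Fin.natAdd n i)
  rw [Fin.append_right] at this
  have e : ((Fin.natAdd n i : Fin (n + ℓ)) : ℕ) = (i : ℕ) + n := by
    show n + (i : ℕ) = (i : ℕ) + n
    omega
  rw [e] at this
  exact this

/-- rpow comparison: if `c * t ≤ s ≤ t` with `0 < c ≤ 1`, `0 < t`, then `s^q` and `t^q`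
agree up to the factor `K = c^{-|q|}`. -/
lemma rpow_comparison {c : ℝ} (hc0 : 0 < c) (hc1 : c ≤ 1) (q : ℝ) :
    ∃ K : ℝ, 1 ≤ K ∧ ∀ s t : ℝ, 0 < t → c * t ≤ s → s ≤ t →
      s ^ q ≤ K * t ^ q ∧ t ^ q ≤ K * s ^ q := by
  refine ⟨c ^ (-|q|), Real.one_le_rpow_of_pos_of_le_one_of_nonpos hc0 hc1 (neg_nonpos.2 (abs_nonneg q)), ?_⟩
  intro s t ht hcs hst
  have hs : 0 < s := lt_of_lt_of_le (by positivity) hcs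
  set r := s / t with hr
  have hr0 : 0 < r := by positivity
  have hrc : c ≤ r := (le_div_iff₀ ht).2 hcs
  have hr1 : r ≤ 1 := (div_le_one ht).2 hst
  have hsrt : s = r * t := by rw [hr, div_mul_cancel₀ _ ht.ne']
  have hKinv : (c ^ (-|q|))⁻¹ = c ^ |q| := by
    rw [← Real.rpow_neg hc0.le, neg_neg]
  have hub : r ^ q ≤ c ^ (-|q|) := by
    rcases le_or_gt 0 q with hq | hq
    · have h1 : r ^ q ≤ 1 := Real.rpow_le_one hr0.le hr1 hq
      exact le_trans h1 (Real.one_le_rpow_of_pos_of_le_one_of_nonpos hc0 hc1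
        (neg_nonpos.2 (abs_nonneg q)))
    · have : |q| = -q := abs_of_neg hq
      rw [this, neg_neg]
      exact Real.rpow_le_rpow_of_nonpos hc0 hrc hq.le
  have hlb : c ^ |q| ≤ r ^ q := by
    rcases le_or_gt 0 q with hq | hq
    · rw [abs_of_nonneg hq]
      exact Real.rpow_le_rpow hc0.le hrc hq
    · have h1 : (1:ℝ) ≤ r ^ q :=
        Real.one_le_rpow_of_pos_of_le_one_of_nonpos hr0 hr1 hq.le
      have h2 : c ^ |q| ≤ 1 := Real.rpow_le_one hc0.le hc1 (abs_nonneg q)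
      exact le_trans h2 h1
  have htq : 0 < t ^ q := Real.rpow_pos_of_pos ht q
  have hsq : 0 < s ^ q := Real.rpow_pos_of_pos hs q
  have hsq_eq : s ^ q = r ^ q * t ^ q := by
    rw [hsrt, Real.mul_rpow hr0.le ht.le]
  constructor
  · rw [hsq_eq]
    exact mul_le_mul_of_nonneg_right hub htq.le
  · -- t^q ≤ K * s^q  ⟺  K⁻¹ * t^q ≤ s^q
    have hK0 : 0 < c ^ (-|q|) := Real.rpow_pos_of_pos hc0 _
    rw [← inv_mul_le_iff₀ hK0, hKinv]
    rw [hsq_eq]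
    exact mul_le_mul_of_nonneg_right hlb htq.le

set_option maxHeartbeats 1000000 in
/-- Corollary 2.6: the Gibbs measure `μ_q` is quasi-Bernoulli. -/
theorem gibbs_quasi_bernoulli
    (m d : ℕ) (hm : 2 ≤ m) (hd : 1 ≤ d)
    (A : Matrix (Fin m) (Fin m) ℕ) (hA01 : ZeroOne A) (hAprim : Primitive A)
    (M : (ℕ → Fin m) → Matrix (Fin d) (Fin d) ℝ)
    (hpos : PosM A M) (hHolder : HolderM A M) (q : ℝ) (P : ℝ)
    (hP : Tendsto (fun n : ℕ => (1 / (n : ℝ)) * Real.log (sSum A M q n)) atTop (𝓝 P))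
    (μ : Measure (ℕ → Fin m))
    (hprob : IsProbabilityMeasure μ) (hsupp : μ (SigmaA A) = 1)
    (hinv : MeasurePreserving shift μ μ) (herg : Ergodic shift μ)
    (hGibbs : ∃ C₁ > (0:ℝ), ∃ C₂ > (0:ℝ), ∀ n : ℕ, 1 ≤ n → ∀ J : Fin n → Fin m, Adm A J →
      ∀ x ∈ cylinder A J,
        C₁ ≤ (μ (cylinder A J)).toReal /
            (Real.exp (-(n : ℝ) * P) * matNorm (Mprod M x n) ^ q) ∧
        (μ (cylinder A J)).toReal /
            (Real.exp (-(n : ℝ) * P) * matNorm (Mprod M x n) ^ q) ≤ C₂) :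
    ∃ C : ℝ, 0 < C ∧ ∀ n ℓ : ℕ, 1 ≤ n → 1 ≤ ℓ →
      ∀ I : Fin n → Fin m, ∀ J : Fin ℓ → Fin m, Adm A (Fin.append I J) →
        C⁻¹ * ((μ (cylinder A I)).toReal * (μ (cylinder A J)).toReal) ≤
            (μ (cylinder A (Fin.append I J))).toReal ∧
        (μ (cylinder A (Fin.append I J))).toReal ≤
            C * ((μ (cylinder A I)).toReal * (μ (cylinder A J)).toReal) := by
  classical
  obtain ⟨C₁, hC₁, C₂, hC₂, hG⟩ := hGibbs
  -- Σ_A is nonempty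
  have hneA : (SigmaA A).Nonempty := by
    rw [Set.nonempty_iff_ne_empty]
    intro h
    rw [h, measure_empty] at hsupp
    exact one_ne_zero hsupp.symm
  -- uniform entry bounds
  obtain ⟨δ, hδ, Δ, hbd⟩ := entry_bounds hd hpos hHolder hneA
  have hδΔ : δ ≤ Δ := by
    obtain ⟨y, hy⟩ := hneA
    exact le_trans (hbd y hy ⟨0, hd⟩ ⟨0, hd⟩).1 (hbd y hy ⟨0, hd⟩ ⟨0, hd⟩).2
  set κ : ℝ := Δ / δ with hκdef
  have hκ1 : 1 ≤ κ := (one_le_div hδ).2 hδΔ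
  have hκ0 : 0 < κ := lt_of_lt_of_le one_pos hκ1
  set c : ℝ := (κ * d)⁻¹ with hcdef
  have hd' : (1:ℝ) ≤ (d:ℝ) := by exact_mod_cast hd
  have hc0 : 0 < c := by
    apply inv_pos.2
    positivity
  have hc1 : c ≤ 1 := by
    rw [hcdef]
    apply inv_le_one_of_one_le₀
    calc (1:ℝ) = 1 * 1 := by ring
      _ ≤ κ * d := mul_le_mul hκ1 hd' zero_le_one hκ0.le
  obtain ⟨K, hK1, hKcomp⟩ := rpow_comparison hc0 hc1 q
  have hK0 : 0 < K := lt_of_lt_of_le one_pos hK1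
  -- successor function
  have hsucc := exists_successor hA01 hAprim
  choose f hf using hsucc
  -- the constant
  refine ⟨K * max (C₂ * C₂ / C₁) (C₂ / (C₁ * C₁)), by positivity, ?_⟩
  set C : ℝ := K * max (C₂ * C₂ / C₁) (C₂ / (C₁ * C₁)) with hCdef
  have hC0 : 0 < C := by positivity
  intro n ℓ hn hℓ I J hIJ
  -- a point in the cylinder of I ++ J
  have hNpos : 0 < n + ℓ := by omega
  set x : ℕ → Fin m := extendWord f (Fin.append I J) hNpos with hxdef
  have hxcyl : x ∈ cylinder A (Fin.append I J) := extendWord_mem_cylinder hf hNpos hIJ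
  have hxA : x ∈ SigmaA A := hxcyl.1
  have hxI : x ∈ cylinder A I := mem_cylinder_append_left hxcyl
  have hxJ : shift^[n] x ∈ cylinder A J := mem_cylinder_append_right hxcyl
  -- matrices
  set B : Matrix (Fin d) (Fin d) ℝ := Mprod M x n with hBdef
  set Cm : Matrix (Fin d) (Fin d) ℝ := Mprod M (shift^[n] x) ℓ with hCmdef
  have hsplit : Mprod M x (n + ℓ) = B * Cm := Mprod_add M x n ℓ
  have hBnn : ∀ i j, 0 ≤ B i j := Mprod_nonneg hpos hxA n
  have hCnn : ∀ i j, 0 ≤ Cm i j := Mprod_nonneg hpos (shift_iterate_mem hxA n) ℓ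
  have hrow : ∀ j j' k, Cm j k ≤ κ * Cm j' k :=
    Mprod_row_comparable hd hpos hδ hbd (shift_iterate_mem hxA n) hℓ
  obtain ⟨hlow, hup⟩ := matNorm_mul_bounds hd hκ0 B Cm hBnn hCnn hrow
  have hnB : 0 < matNorm B := matNorm_pos hd hpos hxA hn
  have hnC : 0 < matNorm Cm := matNorm_pos hd hpos (shift_iterate_mem hxA n) hℓ
  have hnBC : 0 < matNorm (B * Cm) := by
    rw [← hsplit]
    exact matNorm_pos hd hpos hxA (by omega)
  -- rpow comparison
  obtain ⟨hq1, hq2⟩ := hKcomp (matNorm (B * Cm)) (matNorm B * matNorm Cm)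
    (by positivity) hlow hup
  have hmulq : (matNorm B * matNorm Cm) ^ q = matNorm B ^ q * matNorm Cm ^ q :=
    Real.mul_rpow hnB.le hnC.le
  set u : ℝ := matNorm B ^ q with hu
  set v : ℝ := matNorm Cm ^ q with hv
  set w : ℝ := matNorm (B * Cm) ^ q with hw
  have hu0 : 0 < u := Real.rpow_pos_of_pos hnB q
  have hv0 : 0 < v := Real.rpow_pos_of_pos hnC q
  have hw0 : 0 < w := Real.rpow_pos_of_pos hnBC q
  rw [hmulq] at hq1 hq2
  -- Gibbs bounds
  set e1 : ℝ := Real.exp (-(n : ℝ) * P) with he1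
  set e2 : ℝ := Real.exp (-(ℓ : ℝ) * P) with he2
  have he1p : 0 < e1 := Real.exp_pos _
  have he2p : 0 < e2 := Real.exp_pos _
  have he12 : Real.exp (-((n + ℓ : ℕ) : ℝ) * P) = e1 * e2 := by
    rw [he1, he2, ← Real.exp_add]
    congr 1
    push_cast
    ring
  set μI : ℝ := (μ (cylinder A I)).toReal with hμI
  set μJ : ℝ := (μ (cylinder A J)).toReal with hμJ
  set μIJ : ℝ := (μ (cylinder A (Fin.append I J))).toReal with hμIJ
  have hGI := hG n hn I (adm_append_left hIJ) x hxI
  have hGJ := hG ℓ hℓ J (adm_append_right hIJ) (shift^[n] x) hxJ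
  have hGIJ := hG (n + ℓ) (by omega) (Fin.append I J) hIJ x hxcyl
  rw [hsplit] at hGIJ
  rw [he12] at hGIJ
  have hDI : 0 < e1 * u := by positivity
  have hDJ : 0 < e2 * v := by positivity
  have hDIJ : 0 < e1 * e2 * w := by positivity
  have hμI1 : C₁ * (e1 * u) ≤ μI := (le_div_iff₀ hDI).1 hGI.1
  have hμI2 : μI ≤ C₂ * (e1 * u) := by
    have := (div_le_iff₀ hDI).1 hGI.2
    linarith
  have hμJ1 : C₁ * (e2 * v) ≤ μJ := (le_div_iff₀ hDJ).1 hGJ.1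
  have hμJ2 : μJ ≤ C₂ * (e2 * v) := by
    have := (div_le_iff₀ hDJ).1 hGJ.2
    linarith
  have hμIJ1 : C₁ * (e1 * e2 * w) ≤ μIJ := (le_div_iff₀ hDIJ).1 hGIJ.1
  have hμIJ2 : μIJ ≤ C₂ * (e1 * e2 * w) := by
    have := (div_le_iff₀ hDIJ).1 hGIJ.2
    linarith
  have hμI0 : 0 ≤ μI := ENNReal.toReal_nonneg
  have hμJ0 : 0 ≤ μJ := ENNReal.toReal_nonneg
  have hμIJ0 : 0 ≤ μIJ := ENNReal.toReal_nonneg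
  have hCge1 : C₂ * C₂ / C₁ * K ≤ C := by
    rw [hCdef, mul_comm (C₂ * C₂ / C₁) K]
    exact mul_le_mul_of_nonneg_left (le_max_left _ _) hK0.le
  have hCge2 : C₂ / (C₁ * C₁) * K ≤ C := by
    rw [hCdef, mul_comm (C₂ / (C₁ * C₁)) K]
    exact mul_le_mul_of_nonneg_left (le_max_right _ _) hK0.le
  constructor
  · -- lower bound: μI * μJ ≤ C * μIJ
    rw [inv_mul_le_iff₀ hC0]
    calc μI * μJ ≤ (C₂ * (e1 * u)) * (C₂ * (e2 * v)) :=
          mul_le_mul hμI2 hμJ2 hμJ0 (by positivity)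
      _ = (C₂ * C₂) * (e1 * e2) * (u * v) := by ring
      _ ≤ (C₂ * C₂) * (e1 * e2) * (K * w) := by
          apply mul_le_mul_of_nonneg_left hq2 (by positivity)
      _ = (C₂ * C₂ / C₁ * K) * (C₁ * (e1 * e2 * w)) := by field_simp
      _ ≤ (C₂ * C₂ / C₁ * K) * μIJ := by
          apply mul_le_mul_of_nonneg_left hμIJ1 (by positivity)
      _ ≤ C * μIJ := mul_le_mul_of_nonneg_right hCge1 hμIJ0
  · calc μIJ ≤ C₂ * (e1 * e2 * w) := hμIJ2
      _ ≤ C₂ * (e1 * e2 * (K * (u * v))) := by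
          apply mul_le_mul_of_nonneg_left _ hC₂.le
          apply mul_le_mul_of_nonneg_left hq1 (by positivity)
      _ = (C₂ / (C₁ * C₁) * K) * ((C₁ * (e1 * u)) * (C₁ * (e2 * v))) := by
          field_simp
      _ ≤ (C₂ / (C₁ * C₁) * K) * (μI * μJ) := by
          apply mul_le_mul_of_nonneg_left _ (by positivity)
          exact mul_le_mul hμI1 hμJ1 (by positivity) (le_trans (by positivity) hμI1)
      _ ≤ C * (μI * μJ) := mul_le_mul_of_nonneg_right hCge2 (by positivity)
end

section
/- Let M_1,…,M_m be nonnegative d×d matrices satisfying (H2), and fix q > 0. Then: (i) there exists C ≥ 1 with C^{−1} s_ℓ(q) ≤ s_{ℓ+1}(q) ≤ C s_ℓ(q) for all ℓ ≥ 1; (ii) there exists C ≥ 1 such that for all n, ℓ ≥ 1 and all I ∈ Σ_{A,n}: C^{−1} ‖M_I‖^q s_ℓ(q) ≤ Σ_{J∈Σ_{A,ℓ}: IJ∈Σ_{A,n+ℓ}} ‖M_{IJ}‖^q ≤ C ‖M_I‖^q s_ℓ(q), and the same bounds hold for Σ_{J∈Σ_{A,ℓ}: JI∈Σ_{A,n+ℓ}}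 ‖M_{JI}‖^q; (iii) there exists C ≥ 1 such that for all n, ℓ ≥ 1, all I ∈ Σ_{A,n}, J ∈ Σ_{A,ℓ} and all i > n + ℓ: C^{−1} ‖M_I‖^q ‖M_J‖^q s_{i−n−ℓ}(q) ≤ Σ_{k=1}^{2r} Σ_{K: IKJ∈Σ_{A,i+k}, |K|=i+k−n−ℓ} ‖M_{IKJ}‖^q ≤ C ‖M_I‖^q ‖M_J‖^q s_{i−n−ℓ}(q). -/
open Filter MeasureTheory
open scoped Classical BigOperators Topology ENNReal

/-- The matrix product `M_J = M_{j_1} ⋯ M_{j_n}` of a word `J = j_1 ⋯ j_n`. -/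
noncomputable def MprodW {m d : ℕ} (M : Fin m → Matrix (Fin d) (Fin d) ℝ)
    {n : ℕ} (J : Fin n → Fin m) : Matrix (Fin d) (Fin d) ℝ :=
  ((List.ofFn J).map M).prod

/-- The one-letter word `i`. -/
def word1 {m : ℕ} (i : Fin m) : Fin 1 → Fin m := fun _ => i

/-- `s_n(q) = Σ_{I ∈ Σ_{A,n}} ‖M_I‖^q`. -/
noncomputable def sSumW {m d : ℕ} (A : Matrix (Fin m) (Fin m) ℕ)
    (M : Fin m → Matrix (Fin d) (Fin d) ℝ) (q : ℝ) (n : ℕ) : ℝ :=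
  ∑ I ∈ admWords A n, matNorm (MprodW M I) ^ q

/-- Condition (H2) with the constant `r` made explicit: for all `i, j`, the matrix
`Σ_{k=1}^{r} Σ_{K ∈ Σ_{A,k} : iKj ∈ Σ_{A,k+2}} M_K` has all entries positive. -/
def H2At {m d : ℕ} (A : Matrix (Fin m) (Fin m) ℕ)
    (M : Fin m → Matrix (Fin d) (Fin d) ℝ) (r : ℕ) : Prop :=
  ∀ i j : Fin m, ∀ a b : Fin d,
    0 < (∑ k ∈ Finset.Icc 1 r,
      ∑ K ∈ Finset.univ.filter
          (fun K : Fin k → Fin m => Adm A (Fin.append (Fin.append (word1 i) K) (word1 j))),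
        MprodW M K) a b

/-- Condition (H2): `M` is irreducible. -/
def H2 {m d : ℕ} (A : Matrix (Fin m) (Fin m) ℕ)
    (M : Fin m → Matrix (Fin d) (Fin d) ℝ) : Prop :=
  ∃ r : ℕ, 1 ≤ r ∧ H2At A M r

/-- `M` takes values in the nonnegative `d × d` matrices. -/
def NonnegW {m d : ℕ} (M : Fin m → Matrix (Fin d) (Fin d) ℝ) : Prop :=
  ∀ i : Fin m, ∀ a b : Fin d, 0 ≤ M i a b

namespace SES

variable {d : ℕ}

lemma matNorm_nonneg {B : Matrix (Fin d) (Fin d) ℝ} (h : ∀ a b, 0 ≤ B a b) : 0 ≤ matNorm B :=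
  Finset.sum_nonneg fun _ _ => Finset.sum_nonneg fun _ _ => h _ _

lemma matNorm_mono {B C : Matrix (Fin d) (Fin d) ℝ} (h : ∀ a b, B a b ≤ C a b) :
    matNorm B ≤ matNorm C :=
  Finset.sum_le_sum fun _ _ => Finset.sum_le_sum fun _ _ => h _ _

lemma mul_entries_nonneg {X Y : Matrix (Fin d) (Fin d) ℝ} (hX : ∀ a b, 0 ≤ X a b)
    (hY : ∀ a b, 0 ≤ Y a b) : ∀ a b, 0 ≤ (X * Y) a b := fun a b => by
  rw [Matrix.mul_apply]
  exact Finset.sum_nonneg fun u _ => mul_nonneg (hX a u) (hY u b)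

lemma matNorm_mul_le {X Y : Matrix (Fin d) (Fin d) ℝ} (hX : ∀ a b, 0 ≤ X a b)
    (hY : ∀ a b, 0 ≤ Y a b) : matNorm (X * Y) ≤ matNorm X * matNorm Y := by
  have h1 : matNorm (X * Y) = ∑ u, (∑ a, X a u) * (∑ b, Y u b) := by
    unfold matNorm
    simp only [Matrix.mul_apply]
    calc ∑ a, ∑ b, ∑ u, X a u * Y u b
        = ∑ a, ∑ u, ∑ b, X a u * Y u b := Finset.sum_congr rfl fun a _ => Finset.sum_comm
      _ = ∑ u, ∑ a, ∑ b, X a u * Y u b := Finset.sum_comm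
      _ = ∑ u, (∑ a, X a u) * (∑ b, Y u b) := by
          refine Finset.sum_congr rfl fun u _ => ?_
          rw [Finset.sum_mul_sum]
  rw [h1]
  have h2 : matNorm X * matNorm Y = (∑ u, ∑ a, X a u) * matNorm Y := by
    unfold matNorm; rw [Finset.sum_comm]
  rw [h2, Finset.sum_mul]
  refine Finset.sum_le_sum fun u _ => ?_
  refine mul_le_mul_of_nonneg_left ?_ (Finset.sum_nonneg fun a _ => hX a u)
  exact Finset.single_le_sum (f := fun v => ∑ b, Y v b)
    (fun v _ => Finset.sum_nonneg fun b _ => hY v b) (Finset.mem_univ u)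

lemma matNorm_sandwich {X Z Y : Matrix (Fin d) (Fin d) ℝ} (hX : ∀ a b, 0 ≤ X a b)
    (hY : ∀ a b, 0 ≤ Y a b) {c : ℝ} (hZ : ∀ a b, c ≤ Z a b) :
    c * (matNorm X * matNorm Y) ≤ matNorm (X * Z * Y) := by
  have key : ∀ a b, c * ((∑ u, X a u) * (∑ v, Y v b)) ≤ (X * Z * Y) a b := by
    intro a b
    have e1 : (X * Z * Y) a b = ∑ v, ∑ u, X a u * Z u v * Y v b := by
      rw [Matrix.mul_apply]
      refine Finset.sum_congr rfl fun v _ => ?_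
      rw [Matrix.mul_apply, Finset.sum_mul]
    have e2 : c * ((∑ u, X a u) * (∑ v, Y v b)) = ∑ v, ∑ u, c * (X a u * Y v b) := by
      rw [Finset.sum_mul_sum, Finset.sum_comm, Finset.mul_sum]
      refine Finset.sum_congr rfl fun v _ => ?_
      rw [Finset.mul_sum]
    rw [e1, e2]
    refine Finset.sum_le_sum fun v _ => Finset.sum_le_sum fun u _ => ?_
    have h := mul_le_mul_of_nonneg_right
      (mul_le_mul_of_nonneg_left (hZ u v) (hX a u)) (hY v b)
    calc c * (X a u * Y v b) = X a u * c * Y v b := by ring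
      _ ≤ X a u * Z u v * Y v b := h
  have e3 : c * (matNorm X * matNorm Y) = ∑ a, ∑ b, c * ((∑ u, X a u) * (∑ v, Y v b)) := by
    have hy : matNorm Y = ∑ b, ∑ v, Y v b := Finset.sum_comm
    simp only [matNorm]
    rw [show (∑ i, ∑ j, Y i j) = ∑ b, ∑ v, Y v b from Finset.sum_comm,
      Finset.sum_mul_sum, Finset.mul_sum]
    refine Finset.sum_congr rfl fun a _ => ?_
    rw [Finset.mul_sum]
  rw [e3]
  exact Finset.sum_le_sum fun a _ => Finset.sum_le_sum fun b _ => key a b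

lemma matNorm_mul_Z_ge (hd : 0 < d) {X Z : Matrix (Fin d) (Fin d) ℝ}
    (hX : ∀ a b, 0 ≤ X a b) {c : ℝ} (hc : 0 ≤ c) (hZ : ∀ a b, c ≤ Z a b) :
    c * matNorm X ≤ matNorm (X * Z) := by
  set b0 : Fin d := ⟨0, hd⟩
  have h1 : c * matNorm X ≤ ∑ a, (X * Z) a b0 := by
    unfold matNorm
    rw [Finset.mul_sum]
    refine Finset.sum_le_sum fun a _ => ?_
    rw [Matrix.mul_apply, Finset.mul_sum]
    refine Finset.sum_le_sum fun u _ => ?_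
    rw [mul_comm]
    exact mul_le_mul_of_nonneg_left (hZ u b0) (hX a u)
  refine h1.trans (Finset.sum_le_sum fun a _ => ?_)
  refine Finset.single_le_sum (f := fun b => (X * Z) a b) (fun b _ => ?_) (Finset.mem_univ b0)
  show (0:ℝ) ≤ (X * Z) a b
  rw [Matrix.mul_apply]
  exact Finset.sum_nonneg fun u _ => mul_nonneg (hX a u) (hc.trans (hZ u b))

lemma matNorm_Z_mul_ge (hd : 0 < d) {X Z : Matrix (Fin d) (Fin d) ℝ}
    (hX : ∀ a b, 0 ≤ X a b) {c : ℝ} (hc : 0 ≤ c) (hZ : ∀ a b, c ≤ Z a b) :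
    c * matNorm X ≤ matNorm (Z * X) := by
  set a0 : Fin d := ⟨0, hd⟩
  have hXn : matNorm X = ∑ b, ∑ u, X u b := Finset.sum_comm
  have h1 : c * matNorm X ≤ ∑ b, (Z * X) a0 b := by
    rw [hXn, Finset.mul_sum]
    refine Finset.sum_le_sum fun b _ => ?_
    rw [Matrix.mul_apply, Finset.mul_sum]
    refine Finset.sum_le_sum fun u _ => ?_
    exact mul_le_mul_of_nonneg_right (hZ a0 u) (hX u b)
  refine h1.trans ?_
  unfold matNorm
  refine Finset.single_le_sum (f := fun a => ∑ b, (Z * X) a b) (fun a _ => ?_) (Finset.mem_univ a0)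
  refine Finset.sum_nonneg fun b _ => ?_
  rw [Matrix.mul_apply]
  exact Finset.sum_nonneg fun u _ => mul_nonneg (hc.trans (hZ a u)) (hX u b)

lemma matNorm_sum {β : Type*} (s : Finset β) (f : β → Matrix (Fin d) (Fin d) ℝ) :
    matNorm (∑ p ∈ s, f p) = ∑ p ∈ s, matNorm (f p) := by
  unfold matNorm
  rw [Finset.sum_comm (s := s)]
  refine Finset.sum_congr rfl fun a _ => ?_
  rw [Finset.sum_comm (s := s)]
  refine Finset.sum_congr rfl fun b _ => ?_
  simp [Matrix.sum_apply]

variable {m : ℕ}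

def AdmL (A : Matrix (Fin m) (Fin m) ℕ) : List (Fin m) → Prop :=
  List.Chain' (fun a b => A a b = 1)

noncomputable def PL (M : Fin m → Matrix (Fin d) (Fin d) ℝ) (l : List (Fin m)) :
    Matrix (Fin d) (Fin d) ℝ := (l.map M).prod

noncomputable def lists (m ℓ : ℕ) : Finset (List (Fin m)) :=
  (Finset.univ : Finset (Fin ℓ → Fin m)).image List.ofFn

lemma mem_lists {ℓ : ℕ} {l : List (Fin m)} : l ∈ lists m ℓ ↔ l.length = ℓ := by
  constructor
  · intro h; obtain ⟨J, _, rfl⟩ := Finset.mem_image.1 h; simp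
  · rintro rfl
    exact Finset.mem_image.2 ⟨l.get, Finset.mem_univ _, List.ofFn_get l⟩

lemma PL_nil (M : Fin m → Matrix (Fin d) (Fin d) ℝ) : PL M [] = 1 := rfl

lemma PL_cons (M : Fin m → Matrix (Fin d) (Fin d) ℝ) (x : Fin m) (l : List (Fin m)) :
    PL M (x :: l) = M x * PL M l := by simp [PL]

lemma PL_append (M : Fin m → Matrix (Fin d) (Fin d) ℝ) (a b : List (Fin m)) :
    PL M (a ++ b) = PL M a * PL M b := by simp [PL]

variable {M : Fin m → Matrix (Fin d) (Fin d) ℝ} {A : Matrix (Fin m) (Fin m) ℕ}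

lemma PL_nonneg (hnn : ∀ i a b, 0 ≤ M i a b) (l : List (Fin m)) :
    ∀ a b, 0 ≤ PL M l a b := by
  induction l with
  | nil =>
    intro a b
    rw [PL_nil, Matrix.one_apply]
    split <;> norm_num
  | cons x t ih =>
    rw [PL_cons]
    exact mul_entries_nonneg (hnn x) ih

/-- A uniform bound on the norms of letter matrices. -/
noncomputable def Dc (M : Fin m → Matrix (Fin d) (Fin d) ℝ) : ℝ := 1 + ∑ i, matNorm (M i)

lemma one_le_Dc (hnn : ∀ i a b, 0 ≤ M i a b) : 1 ≤ Dc M := by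
  have : 0 ≤ ∑ i, matNorm (M i) :=
    Finset.sum_nonneg fun i _ => matNorm_nonneg (hnn i)
  simp only [Dc]; linarith

lemma norm_le_Dc (hnn : ∀ i a b, 0 ≤ M i a b) (i : Fin m) : matNorm (M i) ≤ Dc M := by
  have h1 : matNorm (M i) ≤ ∑ j, matNorm (M j) :=
    Finset.single_le_sum (f := fun j => matNorm (M j))
      (fun j _ => matNorm_nonneg (hnn j)) (Finset.mem_univ i)
  simp only [Dc]; linarith

lemma norm_mul_PL_le (hnn : ∀ i a b, 0 ≤ M i a b) (l : List (Fin m))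
    {X : Matrix (Fin d) (Fin d) ℝ} (hX : ∀ a b, 0 ≤ X a b) :
    matNorm (X * PL M l) ≤ matNorm X * Dc M ^ l.length := by
  induction l generalizing X with
  | nil => simp [PL_nil]
  | cons x t ih =>
    rw [PL_cons, ← mul_assoc]
    calc matNorm (X * M x * PL M t)
        ≤ matNorm (X * M x) * Dc M ^ t.length := ih (mul_entries_nonneg hX (hnn x))
      _ ≤ (matNorm X * Dc M) * Dc M ^ t.length := by
          refine mul_le_mul_of_nonneg_right ?_ (pow_nonneg (by linarith [one_le_Dc hnn]) _)
          exact (matNorm_mul_le hX (hnn x)).trans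
            (mul_le_mul_of_nonneg_left (norm_le_Dc hnn x) (matNorm_nonneg hX))
      _ = matNorm X * Dc M ^ (x :: t).length := by
          rw [List.length_cons, pow_succ]; ring

lemma norm_PL_mul_le (hnn : ∀ i a b, 0 ≤ M i a b) (l : List (Fin m))
    {X : Matrix (Fin d) (Fin d) ℝ} (hX : ∀ a b, 0 ≤ X a b) :
    matNorm (PL M l * X) ≤ Dc M ^ l.length * matNorm X := by
  induction l with
  | nil => simp [PL_nil]
  | cons x t ih =>
    rw [PL_cons, mul_assoc]
    calc matNorm (M x * (PL M t * X))
        ≤ matNorm (M x) * matNorm (PL M t * X) :=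
          matNorm_mul_le (hnn x) (mul_entries_nonneg (PL_nonneg hnn t) hX)
      _ ≤ Dc M * (Dc M ^ t.length * matNorm X) := by
          refine mul_le_mul (norm_le_Dc hnn x) ih
            (matNorm_nonneg (mul_entries_nonneg (PL_nonneg hnn t) hX)) ?_
          linarith [one_le_Dc hnn]
      _ = Dc M ^ (x :: t).length * matNorm X := by
          rw [List.length_cons, pow_succ]; ring

lemma norm_PL_le (hnn : ∀ i a b, 0 ≤ M i a b) {l : List (Fin m)} (hl : l ≠ []) :
    matNorm (PL M l) ≤ Dc M ^ l.length := by
  cases l with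
  | nil => exact absurd rfl hl
  | cons x t =>
    rw [PL_cons]
    calc matNorm (M x * PL M t) ≤ matNorm (M x) * Dc M ^ t.length := norm_mul_PL_le hnn t (hnn x)
      _ ≤ Dc M * Dc M ^ t.length := by
          refine mul_le_mul_of_nonneg_right (norm_le_Dc hnn x)
            (pow_nonneg (by linarith [one_le_Dc hnn]) _)
      _ = Dc M ^ (x :: t).length := by rw [List.length_cons, pow_succ]; ring

lemma adm_iff_admL {n : ℕ} (A : Matrix (Fin m) (Fin m) ℕ) (J : Fin n → Fin m) :
    Adm A J ↔ AdmL A (List.ofFn J) := by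
  simp only [AdmL, List.Chain']
  rw [List.isChain_ofFn]
  exact Iff.rfl

lemma ofFn_word1 (i : Fin m) : List.ofFn (word1 i) = [i] := by
  simp [word1, List.ofFn_succ]

lemma sum_ofFn_eq {β : Type*} [AddCommMonoid β] (hm : 0 < m) {ℓ : ℕ}
    (Q : (Fin ℓ → Fin m) → Prop) (QL : List (Fin m) → Prop)
    (hQ : ∀ J, Q J ↔ QL (List.ofFn J)) (G : List (Fin m) → β) :
    ∑ J ∈ Finset.univ.filter (fun J : Fin ℓ → Fin m => Q J), G (List.ofFn J)
      = ∑ l ∈ (lists m ℓ).filter QL, G l := by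
  have himg : (lists m ℓ).filter QL = (Finset.univ.filter fun J : Fin ℓ → Fin m => Q J).image
      List.ofFn := by
    ext l
    simp only [Finset.mem_filter, Finset.mem_image, mem_lists]
    constructor
    · rintro ⟨hlen, hq⟩
      subst hlen
      exact ⟨l.get, ⟨Finset.mem_univ _, by rw [hQ, List.ofFn_get]; exact hq⟩, List.ofFn_get l⟩
    · rintro ⟨J, ⟨_, hq⟩, rfl⟩
      exact ⟨by simp, (hQ J).1 hq⟩
  rw [himg, Finset.sum_image]
  intro x _ y _ h
  exact List.ofFn_injective h

lemma admL_append {a b : List (Fin m)} (ha : a ≠ []) (hb : b ≠ []) :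
    AdmL A (a ++ b) ↔ AdmL A a ∧ AdmL A b ∧ A (a.getLast ha) (b.head hb) = 1 := by
  simp only [AdmL, List.Chain']
  rw [List.isChain_append,
    List.getLast?_eq_getLast_of_ne_nil ha, List.head?_eq_head hb]
  simp only [Option.mem_def, Option.some.injEq, forall_eq']

lemma admL_singleton (i : Fin m) : AdmL A [i] := List.isChain_singleton i

lemma admL_append3 {a u b : List (Fin m)} (ha : a ≠ []) (hu : u ≠ []) (hb : b ≠ []) :
    AdmL A (a ++ (u ++ b)) ↔
      AdmL A a ∧ AdmL A u ∧ AdmL A b ∧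
        A (a.getLast ha) (u.head hu) = 1 ∧ A (u.getLast hu) (b.head hb) = 1 := by
  have hub : u ++ b ≠ [] := by simp [hu]
  rw [admL_append ha hub, admL_append hu hb]
  have hh : (u ++ b).head hub = u.head hu := List.head_append_of_ne_nil hu
  rw [hh]
  tauto

lemma admL_bridge {u : List (Fin m)} (hu : u ≠ []) (j j' : Fin m) :
    AdmL A (j :: (u ++ [j'])) ↔
      AdmL A u ∧ A j (u.head hu) = 1 ∧ A (u.getLast hu) j' = 1 := by
  have h1 : j :: (u ++ [j']) = [j] ++ (u ++ [j']) := rfl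
  rw [h1, admL_append3 (a := [j]) (b := [j']) (by simp) hu (by simp)]
  simp only [admL_singleton, List.getLast_singleton, List.head_cons, true_and, and_true]

lemma admL_triple {a u b : List (Fin m)} (ha : a ≠ []) (hu : u ≠ []) (hb : b ≠ [])
    (haa : AdmL A a) (hbb : AdmL A b) :
    AdmL A (a ++ (u ++ b)) ↔ AdmL A ((a.getLast ha) :: (u ++ [b.head hb])) := by
  rw [admL_append3 ha hu hb, admL_bridge hu]
  tauto

lemma admL_append_of_bridge {a u : List (Fin m)} (ha : a ≠ []) (hu : u ≠ [])
    (haa : AdmL A a) (j0 : Fin m)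
    (h : AdmL A ((a.getLast ha) :: (u ++ [j0]))) : AdmL A (a ++ u) := by
  rw [admL_bridge hu] at h
  rw [admL_append ha hu]
  exact ⟨haa, h.1, h.2.1⟩

lemma admL_prepend_of_bridge {a u : List (Fin m)} (ha : a ≠ []) (hu : u ≠ [])
    (haa : AdmL A a) (j0 : Fin m)
    (h : AdmL A (j0 :: (u ++ [a.head ha]))) : AdmL A (u ++ a) := by
  rw [admL_bridge hu] at h
  rw [admL_append hu ha]
  exact ⟨h.1, haa, h.2.2⟩

/-- The bridging matrix `Z_{j j'} = Σ_{k=1}^r Σ_{K : jKj' admissible} M_K`. -/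
noncomputable def Zmat (A : Matrix (Fin m) (Fin m) ℕ) (M : Fin m → Matrix (Fin d) (Fin d) ℝ)
    (r : ℕ) (j j' : Fin m) : Matrix (Fin d) (Fin d) ℝ :=
  ∑ k ∈ Finset.Icc 1 r, ∑ l ∈ (lists m k).filter (fun l => AdmL A (j :: (l ++ [j']))), PL M l

lemma Zmat_eq_H2 (hm : 0 < m) (r : ℕ) (j j' : Fin m) :
    Zmat A M r j j' = ∑ k ∈ Finset.Icc 1 r, ∑ K ∈ Finset.univ.filter
      (fun K : Fin k → Fin m => Adm A (Fin.append (Fin.append (word1 j) K) (word1 j'))),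
      MprodW M K := by
  unfold Zmat
  refine Finset.sum_congr rfl fun k _ => ?_
  rw [← sum_ofFn_eq hm
    (fun K : Fin k → Fin m => Adm A (Fin.append (Fin.append (word1 j) K) (word1 j')))
    (fun l => AdmL A (j :: (l ++ [j']))) ?_ (PL M)]
  · rfl
  intro K
  rw [adm_iff_admL, List.ofFn_fin_append, List.ofFn_fin_append, ofFn_word1, ofFn_word1]
  simp

lemma Zmat_pos (hm : 0 < m) {r : ℕ} (hH2 : H2At A M r) :
    ∀ j j' a b, 0 < Zmat A M r j j' a b := by
  intro j j' a b
  rw [Zmat_eq_H2 hm]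
  exact hH2 j j' a b

lemma exists_c (hm : 0 < m) (hd : 0 < d) {r : ℕ} (hH2 : H2At A M r) :
    ∃ c : ℝ, 0 < c ∧ ∀ j j' a b, c ≤ Zmat A M r j j' a b := by
  have hne : (Finset.univ : Finset ((Fin m × Fin m) × Fin d × Fin d)).Nonempty :=
    ⟨((⟨0, hm⟩, ⟨0, hm⟩), ⟨0, hd⟩, ⟨0, hd⟩), Finset.mem_univ _⟩
  refine ⟨Finset.univ.inf' hne
    (fun p : (Fin m × Fin m) × Fin d × Fin d => Zmat A M r p.1.1 p.1.2 p.2.1 p.2.2), ?_, ?_⟩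
  · rw [Finset.lt_inf'_iff]
    exact fun p _ => Zmat_pos hm hH2 _ _ _ _
  · intro j j' a b
    exact Finset.inf'_le _ (Finset.mem_univ ((j, j'), a, b))

lemma bridge_sum_eq {r : ℕ} {a b : List (Fin m)} (ha : a ≠ []) (hb : b ≠ [])
    (haa : AdmL A a) (hbb : AdmL A b) :
    ∑ k ∈ Finset.Icc 1 r, ∑ l ∈ (lists m k).filter (fun l => AdmL A (a ++ (l ++ b))),
        PL M (a ++ (l ++ b))
      = PL M a * Zmat A M r (a.getLast ha) (b.head hb) * PL M b := by
  unfold Zmat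
  rw [Finset.mul_sum, Finset.sum_mul]
  refine Finset.sum_congr rfl fun k hk => ?_
  have hk1 : 1 ≤ k := (Finset.mem_Icc.1 hk).1
  have hfil : (lists m k).filter (fun l => AdmL A (a ++ (l ++ b)))
      = (lists m k).filter (fun l => AdmL A ((a.getLast ha) :: (l ++ [b.head hb]))) := by
    refine Finset.filter_congr fun l hl => ?_
    have hlne : l ≠ [] := by
      intro h
      have := mem_lists.1 hl
      rw [h] at this
      simp at this
      omega
    exact admL_triple ha hlne hb haa hbb
  rw [hfil, Finset.mul_sum, Finset.sum_mul]
  refine Finset.sum_congr rfl fun l _ => ?_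
  rw [PL_append, PL_append, mul_assoc]

lemma bridge_norm_ge (hnn : ∀ i a b, 0 ≤ M i a b) {r : ℕ} {c : ℝ}
    (hc : ∀ j j' a b, c ≤ Zmat A M r j j' a b)
    {a b : List (Fin m)} (ha : a ≠ []) (hb : b ≠ []) (haa : AdmL A a) (hbb : AdmL A b) :
    c * (matNorm (PL M a) * matNorm (PL M b)) ≤
      ∑ k ∈ Finset.Icc 1 r, ∑ l ∈ (lists m k).filter (fun l => AdmL A (a ++ (l ++ b))),
        matNorm (PL M (a ++ (l ++ b))) := by
  calc c * (matNorm (PL M a) * matNorm (PL M b))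
      ≤ matNorm (PL M a * Zmat A M r (a.getLast ha) (b.head hb) * PL M b) :=
        matNorm_sandwich (PL_nonneg hnn a) (PL_nonneg hnn b) (hc _ _)
    _ = matNorm (∑ k ∈ Finset.Icc 1 r,
          ∑ l ∈ (lists m k).filter (fun l => AdmL A (a ++ (l ++ b))), PL M (a ++ (l ++ b))) := by
        rw [bridge_sum_eq ha hb haa hbb]
    _ = _ := by
        rw [matNorm_sum]
        exact Finset.sum_congr rfl fun k _ => matNorm_sum _ _

lemma bridge_right_ge (hd : 0 < d) (hnn : ∀ i a b, 0 ≤ M i a b) {r : ℕ} {c : ℝ} (hc0 : 0 ≤ c)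
    (hc : ∀ j j' a b, c ≤ Zmat A M r j j' a b)
    {a : List (Fin m)} (ha : a ≠ []) (j0 : Fin m) :
    c * matNorm (PL M a) ≤ ∑ k ∈ Finset.Icc 1 r, ∑ l ∈ (lists m k).filter
        (fun l => AdmL A ((a.getLast ha) :: (l ++ [j0]))), matNorm (PL M (a ++ l)) := by
  have he : ∑ k ∈ Finset.Icc 1 r, ∑ l ∈ (lists m k).filter
      (fun l => AdmL A ((a.getLast ha) :: (l ++ [j0]))), PL M (a ++ l)
      = PL M a * Zmat A M r (a.getLast ha) j0 := by
    unfold Zmat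
    rw [Finset.mul_sum]
    refine Finset.sum_congr rfl fun k _ => ?_
    rw [Finset.mul_sum]
    exact Finset.sum_congr rfl fun l _ => PL_append M a l
  calc c * matNorm (PL M a) ≤ matNorm (PL M a * Zmat A M r (a.getLast ha) j0) :=
        matNorm_mul_Z_ge hd (PL_nonneg hnn a) hc0 (hc _ _)
    _ = _ := by
        rw [← he, matNorm_sum]
        exact Finset.sum_congr rfl fun k _ => matNorm_sum _ _

lemma bridge_left_ge (hd : 0 < d) (hnn : ∀ i a b, 0 ≤ M i a b) {r : ℕ} {c : ℝ} (hc0 : 0 ≤ c)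
    (hc : ∀ j j' a b, c ≤ Zmat A M r j j' a b)
    {a : List (Fin m)} (ha : a ≠ []) (j0 : Fin m) :
    c * matNorm (PL M a) ≤ ∑ k ∈ Finset.Icc 1 r, ∑ l ∈ (lists m k).filter
        (fun l => AdmL A (j0 :: (l ++ [a.head ha]))), matNorm (PL M (l ++ a)) := by
  have he : ∑ k ∈ Finset.Icc 1 r, ∑ l ∈ (lists m k).filter
      (fun l => AdmL A (j0 :: (l ++ [a.head ha]))), PL M (l ++ a)
      = Zmat A M r j0 (a.head ha) * PL M a := by
    unfold Zmat
    rw [Finset.sum_mul]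
    refine Finset.sum_congr rfl fun k _ => ?_
    rw [Finset.sum_mul]
    exact Finset.sum_congr rfl fun l _ => PL_append M l a
  calc c * matNorm (PL M a) ≤ matNorm (Zmat A M r j0 (a.head ha) * PL M a) :=
        matNorm_Z_mul_ge hd (PL_nonneg hnn a) hc0 (hc _ _)
    _ = _ := by
        rw [← he, matNorm_sum]
        exact Finset.sum_congr rfl fun k _ => matNorm_sum _ _

lemma exists_big_term {β : Type*} (F : Finset β) (h : β → ℝ) (B : ℝ) (hF : F.Nonempty)
    (hsum : B ≤ ∑ p ∈ F, h p) (N : ℕ) (hcard : F.card ≤ N)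
    (hnonneg : ∀ p ∈ F, 0 ≤ h p) :
    ∃ p ∈ F, B ≤ N * h p := by
  obtain ⟨p, hp, hmax⟩ := F.exists_max_image h hF
  refine ⟨p, hp, ?_⟩
  have h1 : ∑ x ∈ F, h x ≤ (F.card : ℝ) * h p := by
    calc ∑ x ∈ F, h x ≤ ∑ _x ∈ F, h p := Finset.sum_le_sum fun x hx => hmax x hx
      _ = (F.card : ℝ) * h p := by rw [Finset.sum_const, nsmul_eq_mul]
  have h2 : (F.card : ℝ) * h p ≤ N * h p :=
    mul_le_mul_of_nonneg_right (by exact_mod_cast hcard) (hnonneg p hp)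
  linarith

lemma sigma_card_le (hm : 0 < m) (r : ℕ) (pred : ℕ → List (Fin m) → Prop) :
    ((Finset.Icc 1 r).sigma fun k => (lists m k).filter (pred k)).card ≤ r * m ^ r := by
  rw [Finset.card_sigma]
  calc ∑ k ∈ Finset.Icc 1 r, ((lists m k).filter (pred k)).card
      ≤ ∑ _k ∈ Finset.Icc 1 r, m ^ r := by
        refine Finset.sum_le_sum fun k hk => ?_
        have h1 : ((lists m k).filter (pred k)).card ≤ (lists m k).card :=
          Finset.card_filter_le _ _
        have h2 : (lists m k).card ≤ Fintype.card (Fin k → Fin m) := by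
          calc (lists m k).card ≤ (Finset.univ : Finset (Fin k → Fin m)).card :=
              Finset.card_image_le
            _ = Fintype.card (Fin k → Fin m) := Finset.card_univ
        have h3 : Fintype.card (Fin k → Fin m) = m ^ k := by simp
        have h4 : m ^ k ≤ m ^ r :=
          Nat.pow_le_pow_right hm (Finset.mem_Icc.1 hk).2
        omega
    _ = r * m ^ r := by
        rw [Finset.sum_const, Nat.card_Icc, smul_eq_mul]
        simp

lemma bridge_nonempty (hm : 0 < m) (hd : 0 < d) {r : ℕ} (hH2 : H2At A M r) (j j' : Fin m) :
    ((Finset.Icc 1 r).sigma fun k => (lists m k).filter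
      (fun l => AdmL A (j :: (l ++ [j'])))).Nonempty := by
  by_contra h
  rw [Finset.not_nonempty_iff_eq_empty] at h
  have hz : Zmat A M r j j' = 0 := by
    unfold Zmat
    refine Finset.sum_eq_zero fun k hk => ?_
    have hemp : (lists m k).filter (fun l => AdmL A (j :: (l ++ [j']))) = ∅ := by
      rw [Finset.eq_empty_iff_forall_notMem]
      intro l hl
      have hmem : (⟨k, l⟩ : Σ _ : ℕ, List (Fin m)) ∈
          (Finset.Icc 1 r).sigma (fun k => (lists m k).filter
            (fun l => AdmL A (j :: (l ++ [j'])))) := Finset.mem_sigma.2 ⟨hk, hl⟩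
      rw [h] at hmem
      exact absurd hmem (Finset.notMem_empty _)
    rw [hemp, Finset.sum_empty]
  have hpos := Zmat_pos hm hH2 j j' ⟨0, hd⟩ ⟨0, hd⟩
  rw [hz] at hpos
  simp at hpos

lemma ne_nil_of_mem_lists {k : ℕ} (hk : 1 ≤ k) {l : List (Fin m)} (hl : l ∈ lists m k) :
    l ≠ [] := by
  intro h
  have := mem_lists.1 hl
  rw [h] at this
  simp at this
  omega

lemma exists_bridge_word (hm : 0 < m) (hd : 0 < d) (hnn : ∀ i a b, 0 ≤ M i a b)
    {r : ℕ} (hH2 : H2At A M r) {c : ℝ}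
    (hc : ∀ j j' a b, c ≤ Zmat A M r j j' a b)
    {a b : List (Fin m)} (ha : a ≠ []) (hb : b ≠ []) (haa : AdmL A a) (hbb : AdmL A b) :
    ∃ u : List (Fin m), 1 ≤ u.length ∧ u.length ≤ r ∧ AdmL A (a ++ (u ++ b)) ∧
      c * (matNorm (PL M a) * matNorm (PL M b)) ≤
        (r * m ^ r : ℕ) * matNorm (PL M (a ++ (u ++ b))) := by
  set F := (Finset.Icc 1 r).sigma
    (fun k => (lists m k).filter (fun l => AdmL A (a ++ (l ++ b)))) with hF
  have hFne : F.Nonempty := by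
    obtain ⟨⟨k, l⟩, hp⟩ := bridge_nonempty hm hd hH2 (a.getLast ha) (b.head hb)
    rw [Finset.mem_sigma, Finset.mem_filter] at hp
    have hlne : l ≠ [] := ne_nil_of_mem_lists (Finset.mem_Icc.1 hp.1).1 hp.2.1
    exact ⟨⟨k, l⟩, Finset.mem_sigma.2 ⟨hp.1, Finset.mem_filter.2
      ⟨hp.2.1, (admL_triple ha hlne hb haa hbb).2 hp.2.2⟩⟩⟩
  have hsum : c * (matNorm (PL M a) * matNorm (PL M b)) ≤
      ∑ p ∈ F, matNorm (PL M (a ++ (p.2 ++ b))) := by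
    rw [hF, Finset.sum_sigma]
    exact bridge_norm_ge hnn hc ha hb haa hbb
  obtain ⟨⟨k, l⟩, hpF, hge⟩ := exists_big_term F _ _ hFne hsum (r * m ^ r)
    (sigma_card_le hm r _) (fun p _ => matNorm_nonneg (PL_nonneg hnn _))
  rw [hF, Finset.mem_sigma, Finset.mem_filter] at hpF
  dsimp only at hpF
  have hlen := mem_lists.1 hpF.2.1
  have hIcc := Finset.mem_Icc.1 hpF.1
  exact ⟨l, by omega, by omega, hpF.2.2, hge⟩

lemma exists_extend_letter (hm : 0 < m) (hd : 0 < d) (hnn : ∀ i a b, 0 ≤ M i a b)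
    {r : ℕ} (hr : 1 ≤ r) (hH2 : H2At A M r) {c : ℝ} (hc0 : 0 < c)
    (hc : ∀ j j' a b, c ≤ Zmat A M r j j' a b)
    {a : List (Fin m)} (ha : a ≠ []) (haa : AdmL A a) :
    ∃ i : Fin m, AdmL A (a ++ [i]) ∧
      (c / ((r * m ^ r : ℕ) * Dc M ^ r)) * matNorm (PL M a) ≤ matNorm (PL M (a ++ [i])) := by
  set j0 : Fin m := ⟨0, hm⟩
  set F := (Finset.Icc 1 r).sigma
    (fun k => (lists m k).filter (fun l => AdmL A ((a.getLast ha) :: (l ++ [j0])))) with hF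
  have hFne : F.Nonempty := bridge_nonempty hm hd hH2 _ _
  have hsum : c * matNorm (PL M a) ≤ ∑ p ∈ F, matNorm (PL M (a ++ p.2)) := by
    rw [hF, Finset.sum_sigma]
    exact bridge_right_ge hd hnn hc0.le hc ha j0
  obtain ⟨⟨k, l⟩, hpF, hge⟩ := exists_big_term F _ _ hFne hsum (r * m ^ r)
    (sigma_card_le hm r _) (fun p _ => matNorm_nonneg (PL_nonneg hnn _))
  rw [hF, Finset.mem_sigma, Finset.mem_filter] at hpF
  dsimp only at hpF
  have hlen := mem_lists.1 hpF.2.1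
  have hIcc := Finset.mem_Icc.1 hpF.1
  have hlne : l ≠ [] := ne_nil_of_mem_lists hIcc.1 hpF.2.1
  set i := l.head hlne with hi
  have hal : a ++ l = (a ++ [i]) ++ l.tail := by
    conv_lhs => rw [← List.cons_head_tail hlne]
    rw [← List.append_cons]
  have hadm_al : AdmL A (a ++ l) := admL_append_of_bridge ha hlne haa j0 hpF.2.2
  have hadm : AdmL A (a ++ [i]) := hadm_al.prefix ⟨l.tail, hal.symm⟩
  have hDc1 : (1:ℝ) ≤ Dc M := one_le_Dc hnn
  have hb1 : matNorm (PL M (a ++ l)) ≤ matNorm (PL M (a ++ [i])) * Dc M ^ r := by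
    rw [hal, PL_append]
    calc matNorm (PL M (a ++ [i]) * PL M l.tail)
        ≤ matNorm (PL M (a ++ [i])) * Dc M ^ l.tail.length :=
          norm_mul_PL_le hnn _ (PL_nonneg hnn _)
      _ ≤ matNorm (PL M (a ++ [i])) * Dc M ^ r := by
          refine mul_le_mul_of_nonneg_left ?_ (matNorm_nonneg (PL_nonneg hnn _))
          refine pow_le_pow_right₀ (by linarith) ?_
          have := l.length_tail
          omega
  refine ⟨i, hadm, ?_⟩
  have hNpos : (0:ℝ) < (r * m ^ r : ℕ) := by
    have : 1 ≤ r * m ^ r := Nat.one_le_iff_ne_zero.2 (by positivity)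
    exact_mod_cast Nat.lt_of_lt_of_le Nat.zero_lt_one this
  have hDpos : (0:ℝ) < Dc M ^ r := by positivity
  rw [div_mul_eq_mul_div, div_le_iff₀ (by positivity)]
  have h2 : ((r * m ^ r : ℕ) : ℝ) * matNorm (PL M (a ++ l)) ≤
      ((r * m ^ r : ℕ) : ℝ) * (matNorm (PL M (a ++ [i])) * Dc M ^ r) :=
    mul_le_mul_of_nonneg_left hb1 (by positivity)
  calc c * matNorm (PL M a) ≤ ((r * m ^ r : ℕ) : ℝ) * matNorm (PL M (a ++ l)) := hge
    _ ≤ ((r * m ^ r : ℕ) : ℝ) * (matNorm (PL M (a ++ [i])) * Dc M ^ r) := h2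
    _ = matNorm (PL M (a ++ [i])) * (((r * m ^ r : ℕ) : ℝ) * Dc M ^ r) := by ring

lemma exists_prepend_letter (hm : 0 < m) (hd : 0 < d) (hnn : ∀ i a b, 0 ≤ M i a b)
    {r : ℕ} (hr : 1 ≤ r) (hH2 : H2At A M r) {c : ℝ} (hc0 : 0 < c)
    (hc : ∀ j j' a b, c ≤ Zmat A M r j j' a b)
    {a : List (Fin m)} (ha : a ≠ []) (haa : AdmL A a) :
    ∃ i : Fin m, AdmL A (i :: a) ∧
      (c / ((r * m ^ r : ℕ) * Dc M ^ r)) * matNorm (PL M a) ≤ matNorm (PL M (i :: a)) := by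
  set j0 : Fin m := ⟨0, hm⟩
  set F := (Finset.Icc 1 r).sigma
    (fun k => (lists m k).filter (fun l => AdmL A (j0 :: (l ++ [a.head ha])))) with hF
  have hFne : F.Nonempty := bridge_nonempty hm hd hH2 _ _
  have hsum : c * matNorm (PL M a) ≤ ∑ p ∈ F, matNorm (PL M (p.2 ++ a)) := by
    rw [hF, Finset.sum_sigma]
    exact bridge_left_ge hd hnn hc0.le hc ha j0
  obtain ⟨⟨k, l⟩, hpF, hge⟩ := exists_big_term F _ _ hFne hsum (r * m ^ r)
    (sigma_card_le hm r _) (fun p _ => matNorm_nonneg (PL_nonneg hnn _))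
  rw [hF, Finset.mem_sigma, Finset.mem_filter] at hpF
  dsimp only at hpF
  have hlen := mem_lists.1 hpF.2.1
  have hIcc := Finset.mem_Icc.1 hpF.1
  have hlne : l ≠ [] := ne_nil_of_mem_lists hIcc.1 hpF.2.1
  set i := l.getLast hlne with hi
  have hal : l ++ a = l.dropLast ++ (i :: a) := by
    conv_lhs => rw [← List.dropLast_append_getLast hlne]
    rw [List.append_assoc]
    rfl
  have hadm_al : AdmL A (l ++ a) := admL_prepend_of_bridge ha hlne haa j0 hpF.2.2
  have hadm : AdmL A (i :: a) := hadm_al.suffix ⟨l.dropLast, hal.symm⟩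
  have hDc1 : (1:ℝ) ≤ Dc M := one_le_Dc hnn
  have hb1 : matNorm (PL M (l ++ a)) ≤ Dc M ^ r * matNorm (PL M (i :: a)) := by
    rw [hal, PL_append]
    calc matNorm (PL M l.dropLast * PL M (i :: a))
        ≤ Dc M ^ l.dropLast.length * matNorm (PL M (i :: a)) :=
          norm_PL_mul_le hnn _ (PL_nonneg hnn _)
      _ ≤ Dc M ^ r * matNorm (PL M (i :: a)) := by
          refine mul_le_mul_of_nonneg_right ?_ (matNorm_nonneg (PL_nonneg hnn _))
          refine pow_le_pow_right₀ (by linarith) ?_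
          have := l.length_dropLast
          omega
  refine ⟨i, hadm, ?_⟩
  rw [div_mul_eq_mul_div, div_le_iff₀ (by positivity)]
  have h2 : ((r * m ^ r : ℕ) : ℝ) * matNorm (PL M (l ++ a)) ≤
      ((r * m ^ r : ℕ) : ℝ) * (Dc M ^ r * matNorm (PL M (i :: a))) :=
    mul_le_mul_of_nonneg_left hb1 (by positivity)
  calc c * matNorm (PL M a) ≤ ((r * m ^ r : ℕ) : ℝ) * matNorm (PL M (l ++ a)) := hge
    _ ≤ ((r * m ^ r : ℕ) : ℝ) * (Dc M ^ r * matNorm (PL M (i :: a))) := h2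
    _ = matNorm (PL M (i :: a)) * (((r * m ^ r : ℕ) : ℝ) * Dc M ^ r) := by ring

lemma exists_extend_word {c0 : ℝ} (hc0 : 0 ≤ c0)
    (hL1 : ∀ a : List (Fin m), a ≠ [] → AdmL A a → ∃ i : Fin m, AdmL A (a ++ [i]) ∧
      c0 * matNorm (PL M a) ≤ matNorm (PL M (a ++ [i])))
    (ℓ : ℕ) {a : List (Fin m)} (ha : a ≠ []) (haa : AdmL A a) :
    ∃ w : List (Fin m), w.length = ℓ ∧ AdmL A (a ++ w) ∧
      c0 ^ ℓ * matNorm (PL M a) ≤ matNorm (PL M (a ++ w)) := by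
  induction ℓ with
  | zero => exact ⟨[], rfl, by simpa using haa, by simp⟩
  | succ n ih =>
    obtain ⟨w, hwl, hwa, hwn⟩ := ih
    have hane : a ++ w ≠ [] := by simp [ha]
    obtain ⟨i, hia, hin⟩ := hL1 (a ++ w) hane hwa
    refine ⟨w ++ [i], by simp [hwl], by rw [← List.append_assoc]; exact hia, ?_⟩
    rw [← List.append_assoc]
    calc c0 ^ (n + 1) * matNorm (PL M a) = c0 * (c0 ^ n * matNorm (PL M a)) := by ring
      _ ≤ c0 * matNorm (PL M (a ++ w)) := mul_le_mul_of_nonneg_left hwn hc0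
      _ ≤ matNorm (PL M (a ++ w ++ [i])) := hin

lemma exists_prepend_word {c0 : ℝ} (hc0 : 0 ≤ c0)
    (hL1 : ∀ a : List (Fin m), a ≠ [] → AdmL A a → ∃ i : Fin m, AdmL A (i :: a) ∧
      c0 * matNorm (PL M a) ≤ matNorm (PL M (i :: a)))
    (ℓ : ℕ) {a : List (Fin m)} (ha : a ≠ []) (haa : AdmL A a) :
    ∃ w : List (Fin m), w.length = ℓ ∧ AdmL A (w ++ a) ∧
      c0 ^ ℓ * matNorm (PL M a) ≤ matNorm (PL M (w ++ a)) := by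
  induction ℓ with
  | zero => exact ⟨[], rfl, by simpa using haa, by simp⟩
  | succ n ih =>
    obtain ⟨w, hwl, hwa, hwn⟩ := ih
    have hane : w ++ a ≠ [] := by simp [ha]
    obtain ⟨i, hia, hin⟩ := hL1 (w ++ a) hane hwa
    refine ⟨i :: w, by simp [hwl], hia, ?_⟩
    calc c0 ^ (n + 1) * matNorm (PL M a) = c0 * (c0 ^ n * matNorm (PL M a)) := by ring
      _ ≤ c0 * matNorm (PL M (w ++ a)) := mul_le_mul_of_nonneg_left hwn hc0
      _ ≤ matNorm (PL M (i :: (w ++ a))) := hin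

lemma sum_le_fiber {α β : Type*} [DecidableEq β] (s : Finset α) (t : Finset β) (g : α → β)
    (hg : ∀ a ∈ s, g a ∈ t) (f : β → ℝ) (hf : ∀ b ∈ t, 0 ≤ f b) (N : ℕ)
    (hN : ∀ b ∈ t, (s.filter fun a => g a = b).card ≤ N) :
    ∑ a ∈ s, f (g a) ≤ N * ∑ b ∈ t, f b := by
  rw [← Finset.sum_fiberwise_of_maps_to hg (fun a => f (g a))]
  calc ∑ b ∈ t, ∑ a ∈ s.filter (fun a => g a = b), f (g a)
      = ∑ b ∈ t, ((s.filter fun a => g a = b).card : ℝ) * f b := by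
        refine Finset.sum_congr rfl fun b hb => ?_
        rw [Finset.sum_congr rfl (fun a ha => by rw [(Finset.mem_filter.1 ha).2]),
          Finset.sum_const, nsmul_eq_mul]
    _ ≤ ∑ b ∈ t, (N : ℝ) * f b := by
        refine Finset.sum_le_sum fun b hb => ?_
        exact mul_le_mul_of_nonneg_right (by exact_mod_cast hN b hb) (hf b hb)
    _ = N * ∑ b ∈ t, f b := by rw [Finset.mul_sum]

lemma fiber_card_le {α β γ : Type*} [DecidableEq β] [Fintype γ] (s : Finset α) (g : α → β) (e : α → γ)
    (hinj : ∀ a ∈ s, ∀ a' ∈ s, g a = g a' → e a = e a' → a = a') (b : β) :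
    (s.filter fun a => g a = b).card ≤ Fintype.card γ := by
  rw [← Finset.card_univ]
  refine Finset.card_le_card_of_injOn e (fun a _ => Finset.mem_univ _) ?_
  intro x hx y hy hxy
  rw [Finset.coe_filter] at hx hy
  exact hinj x hx.1 y hy.1 (hx.2.trans hy.2.symm) hxy

/-- The list-level version of `sSumW`. -/
noncomputable def SL (A : Matrix (Fin m) (Fin m) ℕ) (M : Fin m → Matrix (Fin d) (Fin d) ℝ)
    (q : ℝ) (n : ℕ) : ℝ :=
  ∑ l ∈ (lists m n).filter (AdmL A), matNorm (PL M l) ^ q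

lemma sSumW_eq_SL (hm : 0 < m) (q : ℝ) (n : ℕ) : sSumW A M q n = SL A M q n := by
  unfold sSumW admWords SL
  exact sum_ofFn_eq hm (Adm A) (AdmL A) (fun J => adm_iff_admL A J)
    (fun l => matNorm (PL M l) ^ q)

lemma norm_PL_nonneg (hnn : ∀ i a b, 0 ≤ M i a b) (l : List (Fin m)) :
    0 ≤ matNorm (PL M l) := matNorm_nonneg (PL_nonneg hnn l)

lemma term_nonneg (hnn : ∀ i a b, 0 ≤ M i a b) (q : ℝ) (l : List (Fin m)) :
    0 ≤ matNorm (PL M l) ^ q := Real.rpow_nonneg (norm_PL_nonneg hnn l) q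

lemma SL_nonneg (hnn : ∀ i a b, 0 ≤ M i a b) (q : ℝ) (n : ℕ) : 0 ≤ SL A M q n :=
  Finset.sum_nonneg fun l _ => term_nonneg hnn q l

lemma SL_succ_le (hnn : ∀ i a b, 0 ≤ M i a b) {q : ℝ} (hq : 0 ≤ q) (ℓ : ℕ) (hℓ : 1 ≤ ℓ) :
    SL A M q (ℓ + 1) ≤ ((m + 1 : ℕ) : ℝ) * Dc M ^ q * SL A M q ℓ := by
  classical
  unfold SL
  have hmain : ∑ l ∈ (lists m (ℓ + 1)).filter (AdmL A), matNorm (PL M l) ^ q ≤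
      ∑ l ∈ (lists m (ℓ + 1)).filter (AdmL A),
        (fun v => Dc M ^ q * matNorm (PL M v) ^ q) l.dropLast := by
    refine Finset.sum_le_sum fun l hl => ?_
    obtain ⟨hlen, hadm⟩ := Finset.mem_filter.1 hl
    have hlen' := mem_lists.1 hlen
    have hlne : l ≠ [] := by intro h; rw [h] at hlen'; simp at hlen'
    have hsplit : l = l.dropLast ++ [l.getLast hlne] := (List.dropLast_append_getLast hlne).symm
    have hb : matNorm (PL M l) ≤ matNorm (PL M l.dropLast) * Dc M := by
      conv_lhs => rw [hsplit]
      rw [PL_append]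
      calc matNorm (PL M l.dropLast * PL M [l.getLast hlne])
          ≤ matNorm (PL M l.dropLast) * Dc M ^ ([l.getLast hlne]).length :=
            norm_mul_PL_le hnn _ (PL_nonneg hnn _)
        _ = matNorm (PL M l.dropLast) * Dc M := by simp
    calc matNorm (PL M l) ^ q ≤ (matNorm (PL M l.dropLast) * Dc M) ^ q :=
          Real.rpow_le_rpow (norm_PL_nonneg hnn l) hb hq
      _ = Dc M ^ q * matNorm (PL M l.dropLast) ^ q := by
          rw [Real.mul_rpow (norm_PL_nonneg hnn _) (by linarith [one_le_Dc hnn])]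
          ring
  refine hmain.trans ?_
  have hfib := sum_le_fiber (s := (lists m (ℓ + 1)).filter (AdmL A))
    (t := (lists m ℓ).filter (AdmL A)) (g := fun l => l.dropLast)
    ?_ (fun v => Dc M ^ q * matNorm (PL M v) ^ q)
    (fun v _ => mul_nonneg (Real.rpow_nonneg (by linarith [one_le_Dc hnn]) q) (term_nonneg hnn q v))
    (m + 1) ?_
  · refine hfib.trans (le_of_eq ?_)
    rw [← Finset.mul_sum, ← mul_assoc]
  · intro l hl
    obtain ⟨hlen, hadm⟩ := Finset.mem_filter.1 hl
    have hlen' := mem_lists.1 hlen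
    have hlne : l ≠ [] := by intro h; rw [h] at hlen'; simp at hlen'
    refine Finset.mem_filter.2 ⟨mem_lists.2 ?_, ?_⟩
    · rw [List.length_dropLast]; omega
    · exact hadm.prefix ⟨[l.getLast hlne], List.dropLast_append_getLast hlne⟩
  · intro b _
    have := fiber_card_le ((lists m (ℓ + 1)).filter (AdmL A)) (fun l => l.dropLast)
      (fun l => l.getLast?) ?_ b
    · simpa using this
    · intro x hx y hy hg he
      obtain ⟨hxl, _⟩ := Finset.mem_filter.1 hx
      obtain ⟨hyl, _⟩ := Finset.mem_filter.1 hy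
      have hxlen := mem_lists.1 hxl
      have hylen := mem_lists.1 hyl
      have hxne : x ≠ [] := by intro h; rw [h] at hxlen; simp at hxlen
      have hyne : y ≠ [] := by intro h; rw [h] at hylen; simp at hylen
      rw [List.getLast?_eq_getLast_of_ne_nil hxne, List.getLast?_eq_getLast_of_ne_nil hyne] at he
      calc x = x.dropLast ++ [x.getLast hxne] := (List.dropLast_append_getLast hxne).symm
        _ = y.dropLast ++ [y.getLast hyne] := by
            rw [hg, Option.some.inj he]
        _ = y := List.dropLast_append_getLast hyne

lemma SL_le_succ (hnn : ∀ i a b, 0 ≤ M i a b) {c0 : ℝ} (hc0 : 0 < c0)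
    (hL1 : ∀ a : List (Fin m), a ≠ [] → AdmL A a → ∃ i : Fin m, AdmL A (a ++ [i]) ∧
      c0 * matNorm (PL M a) ≤ matNorm (PL M (a ++ [i])))
    {q : ℝ} (hq : 0 ≤ q) (ℓ : ℕ) (hℓ : 1 ≤ ℓ) :
    SL A M q ℓ ≤ (c0⁻¹) ^ q * SL A M q (ℓ + 1) := by
  classical
  set s := (lists m ℓ).filter (AdmL A) with hs
  set t := (lists m (ℓ + 1)).filter (AdmL A) with ht
  have hne : ∀ l ∈ s, l ≠ [] ∧ AdmL A l := by
    intro l hl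
    obtain ⟨h1, h2⟩ := Finset.mem_filter.1 hl
    have := mem_lists.1 h1
    exact ⟨by intro h; rw [h] at this; simp at this; omega, h2⟩
  set g : List (Fin m) → List (Fin m) := fun l =>
    if h : l ≠ [] ∧ AdmL A l then l ++ [Classical.choose (hL1 l h.1 h.2)] else [] with hg
  have hgood : ∀ l ∈ s, AdmL A (g l) ∧
      c0 * matNorm (PL M l) ≤ matNorm (PL M (g l)) ∧ ∃ i, g l = l ++ [i] := by
    intro l hl
    obtain ⟨h1, h2⟩ := hne l hl
    rw [hg]
    simp only [dif_pos (And.intro h1 h2)]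
    obtain ⟨hadm, hineq⟩ := Classical.choose_spec (hL1 l h1 h2)
    exact ⟨hadm, hineq, _, rfl⟩
  have hmaps : ∀ l ∈ s, g l ∈ t := by
    intro l hl
    obtain ⟨hadm, _, i, heq⟩ := hgood l hl
    obtain ⟨h1, _⟩ := Finset.mem_filter.1 hl
    refine Finset.mem_filter.2 ⟨mem_lists.2 ?_, hadm⟩
    rw [heq]
    simp [mem_lists.1 h1]
  have hterm : ∀ l ∈ s, matNorm (PL M l) ^ q ≤
      (fun v => (c0⁻¹) ^ q * matNorm (PL M v) ^ q) (g l) := by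
    intro l hl
    obtain ⟨_, hineq, _⟩ := hgood l hl
    have h1 : matNorm (PL M l) ≤ c0⁻¹ * matNorm (PL M (g l)) := by
      rw [← mul_le_mul_iff_right₀ hc0, ← mul_assoc, mul_inv_cancel₀ hc0.ne', one_mul]
      exact hineq
    calc matNorm (PL M l) ^ q ≤ (c0⁻¹ * matNorm (PL M (g l))) ^ q :=
          Real.rpow_le_rpow (norm_PL_nonneg hnn l) h1 hq
      _ = (c0⁻¹) ^ q * matNorm (PL M (g l)) ^ q :=
          Real.mul_rpow (by positivity) (norm_PL_nonneg hnn _)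
  calc SL A M q ℓ = ∑ l ∈ s, matNorm (PL M l) ^ q := rfl
    _ ≤ ∑ l ∈ s, (fun v => (c0⁻¹) ^ q * matNorm (PL M v) ^ q) (g l) :=
        Finset.sum_le_sum hterm
    _ ≤ (1 : ℕ) * ∑ v ∈ t, (c0⁻¹) ^ q * matNorm (PL M v) ^ q := by
        refine sum_le_fiber s t g hmaps _ (fun v _ =>
          mul_nonneg (by positivity) (term_nonneg hnn q v)) 1 ?_
        intro b _
        refine fiber_card_le s g (fun _ => (0 : Fin 1)) ?_ b
        intro x hx y hy hgxy _
        obtain ⟨hadmx, _, ix, heqx⟩ := hgood x hx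
        obtain ⟨hadmy, _, iy, heqy⟩ := hgood y hy
        rw [heqx, heqy] at hgxy
        have hlenx := mem_lists.1 (Finset.mem_filter.1 hx).1
        have hleny := mem_lists.1 (Finset.mem_filter.1 hy).1
        exact (List.append_inj hgxy (by omega)).1
    _ = (c0⁻¹) ^ q * SL A M q (ℓ + 1) := by
        rw [Nat.cast_one, one_mul, ← Finset.mul_sum]
        rfl

lemma SL_iterate {q K1 : ℝ} (hK1 : 0 ≤ K1)
    (hstep : ∀ ℓ : ℕ, 1 ≤ ℓ → SL A M q (ℓ + 1) ≤ K1 * SL A M q ℓ)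
    (t : ℕ) (ht : 1 ≤ t) (k : ℕ) :
    SL A M q (t + k) ≤ K1 ^ k * SL A M q t := by
  induction k with
  | zero => simp
  | succ n ih =>
    have h1 : SL A M q (t + n + 1) ≤ K1 * SL A M q (t + n) := hstep (t + n) (by omega)
    calc SL A M q (t + (n + 1)) = SL A M q (t + n + 1) := by rw [← Nat.add_assoc]
      _ ≤ K1 * SL A M q (t + n) := h1
      _ ≤ K1 * (K1 ^ n * SL A M q t) := mul_le_mul_of_nonneg_left ih hK1
      _ = K1 ^ (n + 1) * SL A M q t := by ring

lemma SL_le_bar (hm : 0 < m) (hnn : ∀ i a b, 0 ≤ M i a b) {q : ℝ} (hq : 0 ≤ q) {ℓ r : ℕ}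
    (hℓ1 : 1 ≤ ℓ) (hℓr : ℓ ≤ r) :
    SL A M q ℓ ≤ ((m ^ r : ℕ) : ℝ) * (Dc M ^ r) ^ q := by
  have hDc1 := one_le_Dc (M := M) hnn
  have hterm : ∀ l ∈ (lists m ℓ).filter (AdmL A),
      matNorm (PL M l) ^ q ≤ (Dc M ^ r) ^ q := by
    intro l hl
    have hlen := mem_lists.1 (Finset.mem_filter.1 hl).1
    have hlne : l ≠ [] := by intro h; rw [h] at hlen; simp at hlen; omega
    refine Real.rpow_le_rpow (norm_PL_nonneg hnn l) ?_ hq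
    calc matNorm (PL M l) ≤ Dc M ^ l.length := norm_PL_le hnn hlne
      _ ≤ Dc M ^ r := pow_le_pow_right₀ (by linarith) (by omega)
  have hcard : ((lists m ℓ).filter (AdmL A)).card ≤ m ^ r := by
    have h1 : ((lists m ℓ).filter (AdmL A)).card ≤ (lists m ℓ).card :=
      Finset.card_filter_le _ _
    have h2 : (lists m ℓ).card ≤ Fintype.card (Fin ℓ → Fin m) :=
      le_trans Finset.card_image_le (le_of_eq Finset.card_univ)
    have h3 : Fintype.card (Fin ℓ → Fin m) = m ^ ℓ := by simp
    have h4 : m ^ ℓ ≤ m ^ r := Nat.pow_le_pow_right hm hℓr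
    omega
  calc SL A M q ℓ ≤ ∑ _l ∈ (lists m ℓ).filter (AdmL A), (Dc M ^ r) ^ q :=
        Finset.sum_le_sum hterm
    _ = (((lists m ℓ).filter (AdmL A)).card : ℝ) * (Dc M ^ r) ^ q := by
        rw [Finset.sum_const, nsmul_eq_mul]
    _ ≤ ((m ^ r : ℕ) : ℝ) * (Dc M ^ r) ^ q := by
        refine mul_le_mul_of_nonneg_right ?_ (Real.rpow_nonneg (by positivity) q)
        exact_mod_cast hcard

lemma TR_upper (hnn : ∀ i a b, 0 ≤ M i a b) {q : ℝ} (hq : 0 ≤ q)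
    {a : List (Fin m)} (ha : a ≠ []) (ℓ : ℕ) :
    ∑ l ∈ (lists m ℓ).filter (fun l => AdmL A (a ++ l)), matNorm (PL M (a ++ l)) ^ q ≤
      matNorm (PL M a) ^ q * SL A M q ℓ := by
  have h1 : ∀ l ∈ (lists m ℓ).filter (fun l => AdmL A (a ++ l)),
      matNorm (PL M (a ++ l)) ^ q ≤ matNorm (PL M a) ^ q * matNorm (PL M l) ^ q := by
    intro l hl
    have hb : matNorm (PL M (a ++ l)) ≤ matNorm (PL M a) * matNorm (PL M l) := by
      rw [PL_append]
      exact matNorm_mul_le (PL_nonneg hnn a) (PL_nonneg hnn l)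
    calc matNorm (PL M (a ++ l)) ^ q ≤ (matNorm (PL M a) * matNorm (PL M l)) ^ q :=
          Real.rpow_le_rpow (norm_PL_nonneg hnn _) hb hq
      _ = matNorm (PL M a) ^ q * matNorm (PL M l) ^ q :=
          Real.mul_rpow (norm_PL_nonneg hnn a) (norm_PL_nonneg hnn l)
  calc ∑ l ∈ (lists m ℓ).filter (fun l => AdmL A (a ++ l)), matNorm (PL M (a ++ l)) ^ q
      ≤ ∑ l ∈ (lists m ℓ).filter (fun l => AdmL A (a ++ l)),
          matNorm (PL M a) ^ q * matNorm (PL M l) ^ q := Finset.sum_le_sum h1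
    _ ≤ ∑ l ∈ (lists m ℓ).filter (AdmL A), matNorm (PL M a) ^ q * matNorm (PL M l) ^ q := by
        refine Finset.sum_le_sum_of_subset_of_nonneg ?_ ?_
        · intro l hl
          obtain ⟨h1, h2⟩ := Finset.mem_filter.1 hl
          exact Finset.mem_filter.2 ⟨h1, List.IsChain.suffix h2 ⟨a, rfl⟩⟩
        · intro l _ _
          exact mul_nonneg (term_nonneg hnn q a) (term_nonneg hnn q l)
    _ = matNorm (PL M a) ^ q * SL A M q ℓ := by
        rw [SL, Finset.mul_sum]

lemma TL_upper (hnn : ∀ i a b, 0 ≤ M i a b) {q : ℝ} (hq : 0 ≤ q)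
    {a : List (Fin m)} (ha : a ≠ []) (ℓ : ℕ) :
    ∑ l ∈ (lists m ℓ).filter (fun l => AdmL A (l ++ a)), matNorm (PL M (l ++ a)) ^ q ≤
      matNorm (PL M a) ^ q * SL A M q ℓ := by
  have h1 : ∀ l ∈ (lists m ℓ).filter (fun l => AdmL A (l ++ a)),
      matNorm (PL M (l ++ a)) ^ q ≤ matNorm (PL M a) ^ q * matNorm (PL M l) ^ q := by
    intro l hl
    have hb : matNorm (PL M (l ++ a)) ≤ matNorm (PL M l) * matNorm (PL M a) := by
      rw [PL_append]
      exact matNorm_mul_le (PL_nonneg hnn l) (PL_nonneg hnn a)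
    calc matNorm (PL M (l ++ a)) ^ q ≤ (matNorm (PL M l) * matNorm (PL M a)) ^ q :=
          Real.rpow_le_rpow (norm_PL_nonneg hnn _) hb hq
      _ = matNorm (PL M l) ^ q * matNorm (PL M a) ^ q :=
          Real.mul_rpow (norm_PL_nonneg hnn l) (norm_PL_nonneg hnn a)
      _ = matNorm (PL M a) ^ q * matNorm (PL M l) ^ q := mul_comm _ _
  calc ∑ l ∈ (lists m ℓ).filter (fun l => AdmL A (l ++ a)), matNorm (PL M (l ++ a)) ^ q
      ≤ ∑ l ∈ (lists m ℓ).filter (fun l => AdmL A (l ++ a)),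
          matNorm (PL M a) ^ q * matNorm (PL M l) ^ q := Finset.sum_le_sum h1
    _ ≤ ∑ l ∈ (lists m ℓ).filter (AdmL A), matNorm (PL M a) ^ q * matNorm (PL M l) ^ q := by
        refine Finset.sum_le_sum_of_subset_of_nonneg ?_ ?_
        · intro l hl
          obtain ⟨h1, h2⟩ := Finset.mem_filter.1 hl
          exact Finset.mem_filter.2 ⟨h1, List.IsChain.prefix h2 ⟨a, rfl⟩⟩
        · intro l _ _
          exact mul_nonneg (term_nonneg hnn q a) (term_nonneg hnn q l)
    _ = matNorm (PL M a) ^ q * SL A M q ℓ := by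
        rw [SL, Finset.mul_sum]

set_option maxHeartbeats 1000000 in
lemma TR_lower (hm : 0 < m) (hd : 0 < d) (hnn : ∀ i a b, 0 ≤ M i a b)
    {r : ℕ} (hr : 1 ≤ r) (hH2 : H2At A M r)
    {c : ℝ} (hcpos : 0 < c) (hc : ∀ j j' a b, c ≤ Zmat A M r j j' a b)
    {c0 : ℝ} (hc00 : 0 < c0) (hc01 : c0 ≤ 1)
    (hL1 : ∀ a : List (Fin m), a ≠ [] → AdmL A a → ∃ i : Fin m, AdmL A (a ++ [i]) ∧
      c0 * matNorm (PL M a) ≤ matNorm (PL M (a ++ [i])))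
    {q : ℝ} (hq : 0 ≤ q) :
    ∃ e : ℝ, 0 < e ∧ ∀ a : List (Fin m), a ≠ [] → AdmL A a → ∀ ℓ : ℕ, 1 ≤ ℓ →
      e * (matNorm (PL M a) ^ q * SL A M q ℓ) ≤
        ∑ l ∈ (lists m ℓ).filter (fun l => AdmL A (a ++ l)), matNorm (PL M (a ++ l)) ^ q := by
  classical
  have hD1 : (1:ℝ) ≤ Dc M := one_le_Dc hnn
  have hD0 : (0:ℝ) < Dc M := by linarith
  have hN1 : (1:ℝ) ≤ ((r * m ^ r : ℕ) : ℝ) := by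
    have : 1 ≤ r * m ^ r := Nat.one_le_iff_ne_zero.2 (by positivity)
    exact_mod_cast this
  have hN0 : (0:ℝ) < ((r * m ^ r : ℕ) : ℝ) := by linarith
  set c3 : ℝ := c / (((r * m ^ r : ℕ) : ℝ) * Dc M ^ r) with hc3def
  have hc30 : 0 < c3 := by rw [hc3def]; positivity
  set Sbar : ℝ := ((m ^ r : ℕ) : ℝ) * (Dc M ^ r) ^ q with hSbardef
  have hSbar0 : 0 < Sbar := by
    rw [hSbardef]
    have h1 : (0:ℝ) < ((m ^ r : ℕ) : ℝ) := by
      have : 1 ≤ m ^ r := Nat.one_le_iff_ne_zero.2 (by positivity)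
      have := (Nat.one_le_cast (α := ℝ)).2 this
      linarith
    have h2 : (0:ℝ) < (Dc M ^ r) ^ q := Real.rpow_pos_of_pos (by positivity) q
    positivity
  set Nfib : ℕ := (r + 1) * m ^ r with hNfibdef
  have hNfib0 : (0:ℝ) < (Nfib : ℝ) := by
    have : 1 ≤ Nfib := Nat.one_le_iff_ne_zero.2 (by positivity)
    have := (Nat.one_le_cast (α := ℝ)).2 this
    linarith
  set e1 : ℝ := (c0 ^ r) ^ q / Sbar with he1def
  set e2 : ℝ := c3 ^ q / (Nfib : ℝ) with he2def
  have he10 : 0 < e1 := by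
    rw [he1def]
    exact div_pos (Real.rpow_pos_of_pos (by positivity) q) hSbar0
  have he20 : 0 < e2 := by
    rw [he2def]
    exact div_pos (Real.rpow_pos_of_pos hc30 q) hNfib0
  refine ⟨min e1 e2, lt_min he10 he20, ?_⟩
  intro a ha haa ℓ hℓ
  have hXnn : 0 ≤ matNorm (PL M a) ^ q := term_nonneg hnn q a
  by_cases hcase : ℓ ≤ r
  · -- short words: use a single extension word
    obtain ⟨w, hwlen, hwadm, hwineq⟩ := exists_extend_word hc00.le hL1 ℓ ha haa
    have hmem : w ∈ (lists m ℓ).filter (fun l => AdmL A (a ++ l)) :=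
      Finset.mem_filter.2 ⟨mem_lists.2 hwlen, hwadm⟩
    have hsingle : matNorm (PL M (a ++ w)) ^ q ≤
        ∑ l ∈ (lists m ℓ).filter (fun l => AdmL A (a ++ l)), matNorm (PL M (a ++ l)) ^ q :=
      Finset.single_le_sum (f := fun l => matNorm (PL M (a ++ l)) ^ q)
        (fun l _ => term_nonneg hnn q (a ++ l)) hmem
    have h4 : c0 ^ r * matNorm (PL M a) ≤ matNorm (PL M (a ++ w)) := by
      have h3 : c0 ^ r * matNorm (PL M a) ≤ c0 ^ ℓ * matNorm (PL M a) :=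
        mul_le_mul_of_nonneg_right (pow_le_pow_of_le_one hc00.le hc01 hcase)
          (norm_PL_nonneg hnn a)
      exact h3.trans hwineq
    have h2 : (c0 ^ r) ^ q * matNorm (PL M a) ^ q ≤ matNorm (PL M (a ++ w)) ^ q := by
      calc (c0 ^ r) ^ q * matNorm (PL M a) ^ q = (c0 ^ r * matNorm (PL M a)) ^ q :=
            (Real.mul_rpow (by positivity) (norm_PL_nonneg hnn a)).symm
        _ ≤ matNorm (PL M (a ++ w)) ^ q :=
            Real.rpow_le_rpow
              (mul_nonneg (pow_nonneg hc00.le r) (norm_PL_nonneg hnn a)) h4 hq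
    have h5 : SL A M q ℓ ≤ Sbar := SL_le_bar hm hnn hq hℓ hcase
    calc min e1 e2 * (matNorm (PL M a) ^ q * SL A M q ℓ)
        ≤ e1 * (matNorm (PL M a) ^ q * Sbar) := by
          refine mul_le_mul (min_le_left _ _) (mul_le_mul_of_nonneg_left h5 hXnn)
            (mul_nonneg hXnn (SL_nonneg hnn q ℓ)) he10.le
      _ = (c0 ^ r) ^ q * matNorm (PL M a) ^ q := by
          rw [he1def]
          field_simp
      _ ≤ matNorm (PL M (a ++ w)) ^ q := h2
      _ ≤ _ := hsingle
  · -- long words: bridging and truncation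
    push_neg at hcase
    set s := (lists m ℓ).filter (AdmL A) with hs
    set t := (lists m ℓ).filter (fun l => AdmL A (a ++ l)) with ht
    set i0 : Fin m := ⟨0, hm⟩
    have hchoice : ∀ l ∈ s, ∃ p : List (Fin m) × ℕ,
        p.1.length = ℓ ∧ AdmL A (a ++ p.1) ∧
        c3 * (matNorm (PL M a) * matNorm (PL M l)) ≤ matNorm (PL M (a ++ p.1)) ∧
        1 ≤ p.2 ∧ p.2 ≤ r ∧
        ∀ x : ℕ, x < ℓ - p.2 → l.getD x i0 = p.1.getD (p.2 + x) i0 := by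
      intro l hl
      obtain ⟨hmem, hadm⟩ := Finset.mem_filter.1 hl
      have hlen := mem_lists.1 hmem
      have hlne : l ≠ [] := by intro h; rw [h] at hlen; simp at hlen; omega
      obtain ⟨u, hu1, hu2, huadm, huineq⟩ :=
        exists_bridge_word hm hd hnn hH2 hc ha hlne haa hadm
      have hulen : (u ++ l).length = u.length + ℓ := by simp [hlen]
      have hvlen : ((u ++ l).take ℓ).length = ℓ := by
        rw [List.length_take]
        simp [hlen]
      have hsplit : a ++ (u ++ l) = (a ++ (u ++ l).take ℓ) ++ ((u ++ l).drop ℓ) := by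
        conv_lhs => rw [← List.take_append_drop ℓ (u ++ l)]
        rw [List.append_assoc]
      have hvadm : AdmL A (a ++ (u ++ l).take ℓ) :=
        List.IsChain.prefix huadm ⟨(u ++ l).drop ℓ, hsplit.symm⟩
      have hineq2 : matNorm (PL M (a ++ (u ++ l))) ≤
          matNorm (PL M (a ++ (u ++ l).take ℓ)) * Dc M ^ r := by
        rw [hsplit, PL_append]
        calc matNorm (PL M (a ++ (u ++ l).take ℓ) * PL M ((u ++ l).drop ℓ))
            ≤ matNorm (PL M (a ++ (u ++ l).take ℓ)) * Dc M ^ ((u ++ l).drop ℓ).length :=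
              norm_mul_PL_le hnn _ (PL_nonneg hnn _)
          _ ≤ matNorm (PL M (a ++ (u ++ l).take ℓ)) * Dc M ^ r := by
              refine mul_le_mul_of_nonneg_left ?_ (norm_PL_nonneg hnn _)
              refine pow_le_pow_right₀ hD1 ?_
              rw [List.length_drop]
              omega
      have hineq3 : c3 * (matNorm (PL M a) * matNorm (PL M l)) ≤
          matNorm (PL M (a ++ (u ++ l).take ℓ)) := by
        rw [hc3def, div_mul_eq_mul_div, div_le_iff₀ (by positivity)]
        calc c * (matNorm (PL M a) * matNorm (PL M l))
            ≤ ((r * m ^ r : ℕ) : ℝ) * matNorm (PL M (a ++ (u ++ l))) := huineq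
          _ ≤ ((r * m ^ r : ℕ) : ℝ) *
              (matNorm (PL M (a ++ (u ++ l).take ℓ)) * Dc M ^ r) :=
              mul_le_mul_of_nonneg_left hineq2 (by positivity)
          _ = matNorm (PL M (a ++ (u ++ l).take ℓ)) * (((r * m ^ r : ℕ) : ℝ) * Dc M ^ r) := by
              ring
      have hrec : ∀ x : ℕ, x < ℓ - u.length →
          l.getD x i0 = ((u ++ l).take ℓ).getD (u.length + x) i0 := by
        intro x hx
        have hx1 : u.length + x < ℓ := by omega
        have hx2 : u.length + x < (u ++ l).length := by omega
        rw [List.getD_eq_getElem _ _ (by omega),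
          List.getD_eq_getElem _ _ (by rw [hvlen]; omega)]
        rw [List.getElem_take, List.getElem_append_right (by omega)]
        congr 1
        omega
      exact ⟨((u ++ l).take ℓ, u.length), hvlen, hvadm, hineq3, hu1, hu2, hrec⟩
    set P : List (Fin m) → List (Fin m) × ℕ := fun l =>
      if h : l ∈ s then Classical.choose (hchoice l h) else ([], 1) with hPdef
    have hPgood : ∀ l ∈ s, (P l).1.length = ℓ ∧ AdmL A (a ++ (P l).1) ∧
        c3 * (matNorm (PL M a) * matNorm (PL M l)) ≤ matNorm (PL M (a ++ (P l).1)) ∧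
        1 ≤ (P l).2 ∧ (P l).2 ≤ r ∧
        ∀ x : ℕ, x < ℓ - (P l).2 → l.getD x i0 = (P l).1.getD ((P l).2 + x) i0 := by
      intro l hl
      rw [hPdef]
      simp only [dif_pos hl]
      exact Classical.choose_spec (hchoice l hl)
    have hmaps : ∀ l ∈ s, (P l).1 ∈ t := by
      intro l hl
      obtain ⟨h1, h2, _⟩ := hPgood l hl
      exact Finset.mem_filter.2 ⟨mem_lists.2 h1, h2⟩
    have hfibcard : ∀ b ∈ t, (s.filter fun l => (P l).1 = b).card ≤ Nfib := by
      intro b _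
      have hcard := fiber_card_le s (fun l => (P l).1)
        (fun l => ((⟨min (P l).2 r, by omega⟩ : Fin (r + 1)),
          fun y : Fin r => l.getD (ℓ - (P l).2 + (y : ℕ)) i0)) ?_ b
      · calc (s.filter fun l => (P l).1 = b).card
            ≤ Fintype.card (Fin (r + 1) × (Fin r → Fin m)) := hcard
          _ = Nfib := by rw [hNfibdef]; simp
      · intro x hx y hy hgxy hexy
        obtain ⟨hx1, _, _, hx4, hx5, hx6⟩ := hPgood x hx
        obtain ⟨hy1, _, _, hy4, hy5, hy6⟩ := hPgood y hy
        have hxlen := mem_lists.1 (Finset.mem_filter.1 hx).1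
        have hylen := mem_lists.1 (Finset.mem_filter.1 hy).1
        have hk : (P x).2 = (P y).2 := by
          have h3 : min (P x).2 r = min (P y).2 r :=
            congrArg Fin.val (congrArg Prod.fst hexy)
          omega
        have hpad := congrArg Prod.snd hexy
        dsimp only at hpad
        refine List.ext_getElem (by omega) ?_
        intro n hn1 hn2
        by_cases hcase2 : n < ℓ - (P x).2
        · have e1 := hx6 n hcase2
          have e2 := hy6 n (by rw [← hk]; exact hcase2)
          rw [List.getD_eq_getElem _ _ hn1] at e1
          rw [List.getD_eq_getElem _ _ hn2] at e2
          rw [e1, e2, hgxy, hk]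
        · have hnge : ℓ - (P x).2 ≤ n := by omega
          have hnlt : n - (ℓ - (P x).2) < r := by omega
          have hcf := congrFun hpad ⟨n - (ℓ - (P x).2), hnlt⟩
          dsimp only at hcf
          rw [← hk] at hcf
          have hidx : ℓ - (P x).2 + (n - (ℓ - (P x).2)) = n := by omega
          rw [hidx] at hcf
          rw [List.getD_eq_getElem x i0 (by omega),
            List.getD_eq_getElem y i0 (by omega)] at hcf
          exact hcf
    have hterm : ∀ l ∈ s, c3 ^ q * (matNorm (PL M a) ^ q * matNorm (PL M l) ^ q) ≤
        (fun v => matNorm (PL M (a ++ v)) ^ q) ((P l).1) := by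
      intro l hl
      obtain ⟨_, _, h3, _⟩ := hPgood l hl
      calc c3 ^ q * (matNorm (PL M a) ^ q * matNorm (PL M l) ^ q)
          = (c3 * (matNorm (PL M a) * matNorm (PL M l))) ^ q := by
            rw [Real.mul_rpow hc30.le
                (mul_nonneg (norm_PL_nonneg hnn a) (norm_PL_nonneg hnn l)),
              Real.mul_rpow (norm_PL_nonneg hnn a) (norm_PL_nonneg hnn l)]
        _ ≤ matNorm (PL M (a ++ (P l).1)) ^ q := by
            have h4 : 0 ≤ c3 * (matNorm (PL M a) * matNorm (PL M l)) :=
              mul_nonneg hc30.le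
                (mul_nonneg (norm_PL_nonneg hnn a) (norm_PL_nonneg hnn l))
            exact Real.rpow_le_rpow h4 h3 hq
    have hSLs : SL A M q ℓ = ∑ l ∈ s, matNorm (PL M l) ^ q := by rw [hs]; rfl
    have hfib := sum_le_fiber s t (fun l => (P l).1) hmaps
      (fun v => matNorm (PL M (a ++ v)) ^ q) (fun v _ => term_nonneg hnn q (a ++ v))
      Nfib hfibcard
    have hsum1 : c3 ^ q * (matNorm (PL M a) ^ q * SL A M q ℓ) ≤
        (Nfib : ℝ) * ∑ v ∈ t, matNorm (PL M (a ++ v)) ^ q := by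
      calc c3 ^ q * (matNorm (PL M a) ^ q * SL A M q ℓ)
          = ∑ l ∈ s, c3 ^ q * (matNorm (PL M a) ^ q * matNorm (PL M l) ^ q) := by
            rw [hSLs, Finset.mul_sum, Finset.mul_sum]
        _ ≤ ∑ l ∈ s, (fun v => matNorm (PL M (a ++ v)) ^ q) ((P l).1) :=
            Finset.sum_le_sum hterm
        _ ≤ (Nfib : ℝ) * ∑ v ∈ t, matNorm (PL M (a ++ v)) ^ q := hfib
    calc min e1 e2 * (matNorm (PL M a) ^ q * SL A M q ℓ)
        ≤ e2 * (matNorm (PL M a) ^ q * SL A M q ℓ) :=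
          mul_le_mul_of_nonneg_right (min_le_right _ _)
            (mul_nonneg hXnn (SL_nonneg hnn q ℓ))
      _ ≤ ∑ v ∈ t, matNorm (PL M (a ++ v)) ^ q := by
          rw [he2def, div_mul_eq_mul_div, div_le_iff₀ hNfib0]
          calc c3 ^ q * (matNorm (PL M a) ^ q * SL A M q ℓ)
              ≤ (Nfib : ℝ) * ∑ v ∈ t, matNorm (PL M (a ++ v)) ^ q := hsum1
            _ = (∑ v ∈ t, matNorm (PL M (a ++ v)) ^ q) * (Nfib : ℝ) := by ring

set_option maxHeartbeats 1000000 in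
lemma TL_lower (hm : 0 < m) (hd : 0 < d) (hnn : ∀ i a b, 0 ≤ M i a b)
    {r : ℕ} (hr : 1 ≤ r) (hH2 : H2At A M r)
    {c : ℝ} (hcpos : 0 < c) (hc : ∀ j j' a b, c ≤ Zmat A M r j j' a b)
    {c0 : ℝ} (hc00 : 0 < c0) (hc01 : c0 ≤ 1)
    (hL1 : ∀ a : List (Fin m), a ≠ [] → AdmL A a → ∃ i : Fin m, AdmL A (i :: a) ∧
      c0 * matNorm (PL M a) ≤ matNorm (PL M (i :: a)))
    {q : ℝ} (hq : 0 ≤ q) :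
    ∃ e : ℝ, 0 < e ∧ ∀ a : List (Fin m), a ≠ [] → AdmL A a → ∀ ℓ : ℕ, 1 ≤ ℓ →
      e * (matNorm (PL M a) ^ q * SL A M q ℓ) ≤
        ∑ l ∈ (lists m ℓ).filter (fun l => AdmL A (l ++ a)), matNorm (PL M (l ++ a)) ^ q := by
  classical
  have hD1 : (1:ℝ) ≤ Dc M := one_le_Dc hnn
  have hD0 : (0:ℝ) < Dc M := by linarith
  have hN1 : (1:ℝ) ≤ ((r * m ^ r : ℕ) : ℝ) := by
    have : 1 ≤ r * m ^ r := Nat.one_le_iff_ne_zero.2 (by positivity)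
    exact_mod_cast this
  have hN0 : (0:ℝ) < ((r * m ^ r : ℕ) : ℝ) := by linarith
  set c3 : ℝ := c / (((r * m ^ r : ℕ) : ℝ) * Dc M ^ r) with hc3def
  have hc30 : 0 < c3 := by rw [hc3def]; positivity
  set Sbar : ℝ := ((m ^ r : ℕ) : ℝ) * (Dc M ^ r) ^ q with hSbardef
  have hSbar0 : 0 < Sbar := by
    rw [hSbardef]
    have h1 : (0:ℝ) < ((m ^ r : ℕ) : ℝ) := by
      have : 1 ≤ m ^ r := Nat.one_le_iff_ne_zero.2 (by positivity)
      have := (Nat.one_le_cast (α := ℝ)).2 this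
      linarith
    have h2 : (0:ℝ) < (Dc M ^ r) ^ q := Real.rpow_pos_of_pos (by positivity) q
    positivity
  set Nfib : ℕ := (r + 1) * m ^ r with hNfibdef
  have hNfib0 : (0:ℝ) < (Nfib : ℝ) := by
    have : 1 ≤ Nfib := Nat.one_le_iff_ne_zero.2 (by positivity)
    have := (Nat.one_le_cast (α := ℝ)).2 this
    linarith
  set e1 : ℝ := (c0 ^ r) ^ q / Sbar with he1def
  set e2 : ℝ := c3 ^ q / (Nfib : ℝ) with he2def
  have he10 : 0 < e1 := by
    rw [he1def]
    exact div_pos (Real.rpow_pos_of_pos (by positivity) q) hSbar0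
  have he20 : 0 < e2 := by
    rw [he2def]
    exact div_pos (Real.rpow_pos_of_pos hc30 q) hNfib0
  refine ⟨min e1 e2, lt_min he10 he20, ?_⟩
  intro a ha haa ℓ hℓ
  have hXnn : 0 ≤ matNorm (PL M a) ^ q := term_nonneg hnn q a
  by_cases hcase : ℓ ≤ r
  · obtain ⟨w, hwlen, hwadm, hwineq⟩ := exists_prepend_word hc00.le hL1 ℓ ha haa
    have hmem : w ∈ (lists m ℓ).filter (fun l => AdmL A (l ++ a)) :=
      Finset.mem_filter.2 ⟨mem_lists.2 hwlen, hwadm⟩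
    have hsingle : matNorm (PL M (w ++ a)) ^ q ≤
        ∑ l ∈ (lists m ℓ).filter (fun l => AdmL A (l ++ a)), matNorm (PL M (l ++ a)) ^ q :=
      Finset.single_le_sum (f := fun l => matNorm (PL M (l ++ a)) ^ q)
        (fun l _ => term_nonneg hnn q (l ++ a)) hmem
    have h4 : c0 ^ r * matNorm (PL M a) ≤ matNorm (PL M (w ++ a)) := by
      have h3 : c0 ^ r * matNorm (PL M a) ≤ c0 ^ ℓ * matNorm (PL M a) :=
        mul_le_mul_of_nonneg_right (pow_le_pow_of_le_one hc00.le hc01 hcase)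
          (norm_PL_nonneg hnn a)
      exact h3.trans hwineq
    have h2 : (c0 ^ r) ^ q * matNorm (PL M a) ^ q ≤ matNorm (PL M (w ++ a)) ^ q := by
      calc (c0 ^ r) ^ q * matNorm (PL M a) ^ q = (c0 ^ r * matNorm (PL M a)) ^ q :=
            (Real.mul_rpow (by positivity) (norm_PL_nonneg hnn a)).symm
        _ ≤ matNorm (PL M (w ++ a)) ^ q :=
            Real.rpow_le_rpow
              (mul_nonneg (pow_nonneg hc00.le r) (norm_PL_nonneg hnn a)) h4 hq
    have h5 : SL A M q ℓ ≤ Sbar := SL_le_bar hm hnn hq hℓ hcase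
    calc min e1 e2 * (matNorm (PL M a) ^ q * SL A M q ℓ)
        ≤ e1 * (matNorm (PL M a) ^ q * Sbar) := by
          refine mul_le_mul (min_le_left _ _) (mul_le_mul_of_nonneg_left h5 hXnn)
            (mul_nonneg hXnn (SL_nonneg hnn q ℓ)) he10.le
      _ = (c0 ^ r) ^ q * matNorm (PL M a) ^ q := by
          rw [he1def]
          field_simp
      _ ≤ matNorm (PL M (w ++ a)) ^ q := h2
      _ ≤ _ := hsingle
  · push_neg at hcase
    set s := (lists m ℓ).filter (AdmL A) with hs
    set t := (lists m ℓ).filter (fun l => AdmL A (l ++ a)) with ht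
    set i0 : Fin m := ⟨0, hm⟩
    have hchoice : ∀ l ∈ s, ∃ p : List (Fin m) × ℕ,
        p.1.length = ℓ ∧ AdmL A (p.1 ++ a) ∧
        c3 * (matNorm (PL M a) * matNorm (PL M l)) ≤ matNorm (PL M (p.1 ++ a)) ∧
        1 ≤ p.2 ∧ p.2 ≤ r ∧
        ∀ x : ℕ, x < ℓ - p.2 → l.getD (p.2 + x) i0 = p.1.getD x i0 := by
      intro l hl
      obtain ⟨hmem, hadm⟩ := Finset.mem_filter.1 hl
      have hlen := mem_lists.1 hmem
      have hlne : l ≠ [] := by intro h; rw [h] at hlen; simp at hlen; omega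
      obtain ⟨u, hu1, hu2, huadm, huineq⟩ :=
        exists_bridge_word hm hd hnn hH2 hc hlne ha hadm haa
      have hulen : (l ++ u).length = ℓ + u.length := by simp [hlen]
      have hvlen : ((l ++ u).drop u.length).length = ℓ := by
        rw [List.length_drop]
        omega
      have hsplit : l ++ (u ++ a) =
          ((l ++ u).take u.length) ++ (((l ++ u).drop u.length) ++ a) := by
        conv_lhs => rw [← List.append_assoc, ← List.take_append_drop u.length (l ++ u)]
        rw [List.append_assoc]
      have hvadm : AdmL A (((l ++ u).drop u.length) ++ a) :=
        List.IsChain.suffix huadm ⟨(l ++ u).take u.length, hsplit.symm⟩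
      have hineq2 : matNorm (PL M (l ++ (u ++ a))) ≤
          Dc M ^ r * matNorm (PL M (((l ++ u).drop u.length) ++ a)) := by
        rw [hsplit, PL_append]
        calc matNorm (PL M ((l ++ u).take u.length) * PL M (((l ++ u).drop u.length) ++ a))
            ≤ Dc M ^ ((l ++ u).take u.length).length *
                matNorm (PL M (((l ++ u).drop u.length) ++ a)) :=
              norm_PL_mul_le hnn _ (PL_nonneg hnn _)
          _ ≤ Dc M ^ r * matNorm (PL M (((l ++ u).drop u.length) ++ a)) := by
              refine mul_le_mul_of_nonneg_right ?_ (norm_PL_nonneg hnn _)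
              refine pow_le_pow_right₀ hD1 ?_
              rw [List.length_take]
              omega
      have hineq3 : c3 * (matNorm (PL M a) * matNorm (PL M l)) ≤
          matNorm (PL M (((l ++ u).drop u.length) ++ a)) := by
        rw [hc3def, div_mul_eq_mul_div, div_le_iff₀ (by positivity)]
        calc c * (matNorm (PL M a) * matNorm (PL M l))
            = c * (matNorm (PL M l) * matNorm (PL M a)) := by ring
          _ ≤ ((r * m ^ r : ℕ) : ℝ) * matNorm (PL M (l ++ (u ++ a))) := huineq
          _ ≤ ((r * m ^ r : ℕ) : ℝ) *
              (Dc M ^ r * matNorm (PL M (((l ++ u).drop u.length) ++ a))) :=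
              mul_le_mul_of_nonneg_left hineq2 (by positivity)
          _ = matNorm (PL M (((l ++ u).drop u.length) ++ a)) *
              (((r * m ^ r : ℕ) : ℝ) * Dc M ^ r) := by ring
      have hrec : ∀ x : ℕ, x < ℓ - u.length →
          l.getD (u.length + x) i0 = ((l ++ u).drop u.length).getD x i0 := by
        intro x hx
        rw [List.getD_eq_getElem _ _ (by omega),
          List.getD_eq_getElem _ _ (by rw [hvlen]; omega)]
        rw [List.getElem_drop]
        rw [List.getElem_append_left (by omega)]
      exact ⟨((l ++ u).drop u.length, u.length), hvlen, hvadm, hineq3, hu1, hu2, hrec⟩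
    set P : List (Fin m) → List (Fin m) × ℕ := fun l =>
      if h : l ∈ s then Classical.choose (hchoice l h) else ([], 1) with hPdef
    have hPgood : ∀ l ∈ s, (P l).1.length = ℓ ∧ AdmL A ((P l).1 ++ a) ∧
        c3 * (matNorm (PL M a) * matNorm (PL M l)) ≤ matNorm (PL M ((P l).1 ++ a)) ∧
        1 ≤ (P l).2 ∧ (P l).2 ≤ r ∧
        ∀ x : ℕ, x < ℓ - (P l).2 → l.getD ((P l).2 + x) i0 = (P l).1.getD x i0 := by
      intro l hl
      rw [hPdef]
      simp only [dif_pos hl]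
      exact Classical.choose_spec (hchoice l hl)
    have hmaps : ∀ l ∈ s, (P l).1 ∈ t := by
      intro l hl
      obtain ⟨h1, h2, _⟩ := hPgood l hl
      exact Finset.mem_filter.2 ⟨mem_lists.2 h1, h2⟩
    have hfibcard : ∀ b ∈ t, (s.filter fun l => (P l).1 = b).card ≤ Nfib := by
      intro b _
      have hcard := fiber_card_le s (fun l => (P l).1)
        (fun l => ((⟨min (P l).2 r, by omega⟩ : Fin (r + 1)),
          fun y : Fin r => l.getD (y : ℕ) i0)) ?_ b
      · calc (s.filter fun l => (P l).1 = b).card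
            ≤ Fintype.card (Fin (r + 1) × (Fin r → Fin m)) := hcard
          _ = Nfib := by rw [hNfibdef]; simp
      · intro x hx y hy hgxy hexy
        obtain ⟨hx1, _, _, hx4, hx5, hx6⟩ := hPgood x hx
        obtain ⟨hy1, _, _, hy4, hy5, hy6⟩ := hPgood y hy
        have hxlen := mem_lists.1 (Finset.mem_filter.1 hx).1
        have hylen := mem_lists.1 (Finset.mem_filter.1 hy).1
        have hk : (P x).2 = (P y).2 := by
          have h3 : min (P x).2 r = min (P y).2 r :=
            congrArg Fin.val (congrArg Prod.fst hexy)
          omega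
        have hpad := congrArg Prod.snd hexy
        dsimp only at hpad
        refine List.ext_getElem (by omega) ?_
        intro n hn1 hn2
        by_cases hcase2 : n < (P x).2
        · have hcf := congrFun hpad ⟨n, by omega⟩
          dsimp only at hcf
          rw [List.getD_eq_getElem x i0 (by omega),
            List.getD_eq_getElem y i0 (by omega)] at hcf
          exact hcf
        · have hnge : (P x).2 ≤ n := by omega
          have e1 := hx6 (n - (P x).2) (by omega)
          have e2 := hy6 (n - (P x).2) (by rw [← hk]; omega)
          rw [← hk] at e2
          have hidx : (P x).2 + (n - (P x).2) = n := by omega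
          rw [hidx] at e1 e2
          rw [List.getD_eq_getElem x i0 (by omega)] at e1
          rw [List.getD_eq_getElem y i0 (by omega)] at e2
          rw [e1, e2, hgxy]
    have hterm : ∀ l ∈ s, c3 ^ q * (matNorm (PL M a) ^ q * matNorm (PL M l) ^ q) ≤
        (fun v => matNorm (PL M (v ++ a)) ^ q) ((P l).1) := by
      intro l hl
      obtain ⟨_, _, h3, _⟩ := hPgood l hl
      calc c3 ^ q * (matNorm (PL M a) ^ q * matNorm (PL M l) ^ q)
          = (c3 * (matNorm (PL M a) * matNorm (PL M l))) ^ q := by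
            rw [Real.mul_rpow hc30.le
                (mul_nonneg (norm_PL_nonneg hnn a) (norm_PL_nonneg hnn l)),
              Real.mul_rpow (norm_PL_nonneg hnn a) (norm_PL_nonneg hnn l)]
        _ ≤ matNorm (PL M ((P l).1 ++ a)) ^ q := by
            have h4 : 0 ≤ c3 * (matNorm (PL M a) * matNorm (PL M l)) :=
              mul_nonneg hc30.le
                (mul_nonneg (norm_PL_nonneg hnn a) (norm_PL_nonneg hnn l))
            exact Real.rpow_le_rpow h4 h3 hq
    have hSLs : SL A M q ℓ = ∑ l ∈ s, matNorm (PL M l) ^ q := by rw [hs]; rfl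
    have hfib := sum_le_fiber s t (fun l => (P l).1) hmaps
      (fun v => matNorm (PL M (v ++ a)) ^ q) (fun v _ => term_nonneg hnn q (v ++ a))
      Nfib hfibcard
    have hsum1 : c3 ^ q * (matNorm (PL M a) ^ q * SL A M q ℓ) ≤
        (Nfib : ℝ) * ∑ v ∈ t, matNorm (PL M (v ++ a)) ^ q := by
      calc c3 ^ q * (matNorm (PL M a) ^ q * SL A M q ℓ)
          = ∑ l ∈ s, c3 ^ q * (matNorm (PL M a) ^ q * matNorm (PL M l) ^ q) := by
            rw [hSLs, Finset.mul_sum, Finset.mul_sum]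
        _ ≤ ∑ l ∈ s, (fun v => matNorm (PL M (v ++ a)) ^ q) ((P l).1) :=
            Finset.sum_le_sum hterm
        _ ≤ (Nfib : ℝ) * ∑ v ∈ t, matNorm (PL M (v ++ a)) ^ q := hfib
    calc min e1 e2 * (matNorm (PL M a) ^ q * SL A M q ℓ)
        ≤ e2 * (matNorm (PL M a) ^ q * SL A M q ℓ) :=
          mul_le_mul_of_nonneg_right (min_le_right _ _)
            (mul_nonneg hXnn (SL_nonneg hnn q ℓ))
      _ ≤ ∑ v ∈ t, matNorm (PL M (v ++ a)) ^ q := by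
          rw [he2def, div_mul_eq_mul_div, div_le_iff₀ hNfib0]
          calc c3 ^ q * (matNorm (PL M a) ^ q * SL A M q ℓ)
              ≤ (Nfib : ℝ) * ∑ v ∈ t, matNorm (PL M (v ++ a)) ^ q := hsum1
            _ = (∑ v ∈ t, matNorm (PL M (v ++ a)) ^ q) * (Nfib : ℝ) := by ring

lemma III_upper (hm : 0 < m) (hnn : ∀ i a b, 0 ≤ M i a b) {q : ℝ} (hq : 0 ≤ q)
    {K1 : ℝ} (hK1 : 1 ≤ K1)
    (hstep : ∀ ℓ : ℕ, 1 ≤ ℓ → SL A M q (ℓ + 1) ≤ K1 * SL A M q ℓ)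
    {a b : List (Fin m)} (ha : a ≠ []) (hb : b ≠ []) (r2 : ℕ) {t : ℕ} (ht : 1 ≤ t) :
    ∑ k ∈ Finset.Icc 1 r2, ∑ l ∈ (lists m (t + k)).filter
        (fun l => AdmL A (a ++ (l ++ b))), matNorm (PL M (a ++ (l ++ b))) ^ q ≤
      ((r2 : ℝ) * K1 ^ r2) *
        (matNorm (PL M a) ^ q * matNorm (PL M b) ^ q * SL A M q t) := by
  have hinner : ∀ k ∈ Finset.Icc 1 r2,
      ∑ l ∈ (lists m (t + k)).filter (fun l => AdmL A (a ++ (l ++ b))),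
        matNorm (PL M (a ++ (l ++ b))) ^ q ≤
      K1 ^ r2 * (matNorm (PL M a) ^ q * matNorm (PL M b) ^ q * SL A M q t) := by
    intro k hk
    have hk2 := Finset.mem_Icc.1 hk
    have h1 : ∀ l ∈ (lists m (t + k)).filter (fun l => AdmL A (a ++ (l ++ b))),
        matNorm (PL M (a ++ (l ++ b))) ^ q ≤
          matNorm (PL M a) ^ q * matNorm (PL M b) ^ q * matNorm (PL M l) ^ q := by
      intro l _
      have hbnd : matNorm (PL M (a ++ (l ++ b))) ≤
          matNorm (PL M a) * (matNorm (PL M l) * matNorm (PL M b)) := by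
        rw [PL_append, PL_append]
        calc matNorm (PL M a * (PL M l * PL M b))
            ≤ matNorm (PL M a) * matNorm (PL M l * PL M b) :=
              matNorm_mul_le (PL_nonneg hnn a)
                (mul_entries_nonneg (PL_nonneg hnn l) (PL_nonneg hnn b))
          _ ≤ matNorm (PL M a) * (matNorm (PL M l) * matNorm (PL M b)) :=
              mul_le_mul_of_nonneg_left
                (matNorm_mul_le (PL_nonneg hnn l) (PL_nonneg hnn b))
                (norm_PL_nonneg hnn a)
      calc matNorm (PL M (a ++ (l ++ b))) ^ q
          ≤ (matNorm (PL M a) * (matNorm (PL M l) * matNorm (PL M b))) ^ q :=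
            Real.rpow_le_rpow (norm_PL_nonneg hnn _) hbnd hq
        _ = matNorm (PL M a) ^ q * (matNorm (PL M l) ^ q * matNorm (PL M b) ^ q) := by
            rw [Real.mul_rpow (norm_PL_nonneg hnn a)
                (mul_nonneg (norm_PL_nonneg hnn l) (norm_PL_nonneg hnn b)),
              Real.mul_rpow (norm_PL_nonneg hnn l) (norm_PL_nonneg hnn b)]
        _ = matNorm (PL M a) ^ q * matNorm (PL M b) ^ q * matNorm (PL M l) ^ q := by
            ring
    calc ∑ l ∈ (lists m (t + k)).filter (fun l => AdmL A (a ++ (l ++ b))),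
          matNorm (PL M (a ++ (l ++ b))) ^ q
        ≤ ∑ l ∈ (lists m (t + k)).filter (fun l => AdmL A (a ++ (l ++ b))),
            matNorm (PL M a) ^ q * matNorm (PL M b) ^ q * matNorm (PL M l) ^ q :=
          Finset.sum_le_sum h1
      _ ≤ ∑ l ∈ (lists m (t + k)).filter (AdmL A),
            matNorm (PL M a) ^ q * matNorm (PL M b) ^ q * matNorm (PL M l) ^ q := by
          refine Finset.sum_le_sum_of_subset_of_nonneg ?_ ?_
          · intro l hl
            obtain ⟨h1', h2'⟩ := Finset.mem_filter.1 hl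
            refine Finset.mem_filter.2 ⟨h1', List.IsChain.infix h2' ⟨a, b, ?_⟩⟩
            rw [List.append_assoc]
          · intro l _ _
            exact mul_nonneg (mul_nonneg (term_nonneg hnn q a) (term_nonneg hnn q b))
              (term_nonneg hnn q l)
      _ = matNorm (PL M a) ^ q * matNorm (PL M b) ^ q * SL A M q (t + k) := by
          rw [SL, Finset.mul_sum]
      _ ≤ matNorm (PL M a) ^ q * matNorm (PL M b) ^ q * (K1 ^ k * SL A M q t) := by
          refine mul_le_mul_of_nonneg_left (SL_iterate (by linarith) hstep t ht k)
            (mul_nonneg (term_nonneg hnn q a) (term_nonneg hnn q b))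
      _ ≤ K1 ^ r2 * (matNorm (PL M a) ^ q * matNorm (PL M b) ^ q * SL A M q t) := by
          have hKk : K1 ^ k ≤ K1 ^ r2 := pow_le_pow_right₀ hK1 hk2.2
          have hnn2 : 0 ≤ matNorm (PL M a) ^ q * matNorm (PL M b) ^ q * SL A M q t :=
            mul_nonneg (mul_nonneg (term_nonneg hnn q a) (term_nonneg hnn q b))
              (SL_nonneg hnn q t)
          calc matNorm (PL M a) ^ q * matNorm (PL M b) ^ q * (K1 ^ k * SL A M q t)
              = K1 ^ k * (matNorm (PL M a) ^ q * matNorm (PL M b) ^ q * SL A M q t) := by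
                ring
            _ ≤ K1 ^ r2 * (matNorm (PL M a) ^ q * matNorm (PL M b) ^ q * SL A M q t) :=
                mul_le_mul_of_nonneg_right hKk hnn2
  calc ∑ k ∈ Finset.Icc 1 r2, ∑ l ∈ (lists m (t + k)).filter
        (fun l => AdmL A (a ++ (l ++ b))), matNorm (PL M (a ++ (l ++ b))) ^ q
      ≤ ∑ _k ∈ Finset.Icc 1 r2,
          K1 ^ r2 * (matNorm (PL M a) ^ q * matNorm (PL M b) ^ q * SL A M q t) :=
        Finset.sum_le_sum hinner
    _ = ((Finset.Icc 1 r2).card : ℝ) *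
        (K1 ^ r2 * (matNorm (PL M a) ^ q * matNorm (PL M b) ^ q * SL A M q t)) := by
        rw [Finset.sum_const, nsmul_eq_mul]
    _ ≤ ((r2 : ℝ) * K1 ^ r2) *
        (matNorm (PL M a) ^ q * matNorm (PL M b) ^ q * SL A M q t) := by
        have hcard : ((Finset.Icc 1 r2).card : ℝ) ≤ (r2 : ℝ) := by
          rw [Nat.card_Icc]
          exact_mod_cast Nat.le_of_eq (by omega)
        have hnn2 : 0 ≤ K1 ^ r2 * (matNorm (PL M a) ^ q * matNorm (PL M b) ^ q *
            SL A M q t) :=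
          mul_nonneg (pow_nonneg (by linarith) r2)
            (mul_nonneg (mul_nonneg (term_nonneg hnn q a) (term_nonneg hnn q b))
              (SL_nonneg hnn q t))
        calc ((Finset.Icc 1 r2).card : ℝ) *
            (K1 ^ r2 * (matNorm (PL M a) ^ q * matNorm (PL M b) ^ q * SL A M q t))
            ≤ (r2 : ℝ) * (K1 ^ r2 * (matNorm (PL M a) ^ q * matNorm (PL M b) ^ q *
                SL A M q t)) := mul_le_mul_of_nonneg_right hcard hnn2
          _ = _ := by ring

set_option maxHeartbeats 1000000 in
lemma III_lower (hm : 0 < m) (hd : 0 < d) (hnn : ∀ i a b, 0 ≤ M i a b)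
    {r : ℕ} (hr : 1 ≤ r) (hH2 : H2At A M r)
    {c : ℝ} (hcpos : 0 < c) (hc : ∀ j j' a b, c ≤ Zmat A M r j j' a b)
    {q : ℝ} (hq : 0 ≤ q) :
    ∃ e : ℝ, 0 < e ∧ ∀ a b : List (Fin m), a ≠ [] → b ≠ [] → AdmL A a → AdmL A b →
      ∀ t : ℕ, 1 ≤ t →
      e * (matNorm (PL M a) ^ q * matNorm (PL M b) ^ q * SL A M q t) ≤
        ∑ k ∈ Finset.Icc 1 (2 * r), ∑ l ∈ (lists m (t + k)).filter
          (fun l => AdmL A (a ++ (l ++ b))), matNorm (PL M (a ++ (l ++ b))) ^ q := by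
  classical
  have hN1 : (1:ℝ) ≤ ((r * m ^ r : ℕ) : ℝ) := by
    have : 1 ≤ r * m ^ r := Nat.one_le_iff_ne_zero.2 (by positivity)
    exact_mod_cast this
  have hN0 : (0:ℝ) < ((r * m ^ r : ℕ) : ℝ) := by linarith
  set c4 : ℝ := c ^ 2 / (((r * m ^ r : ℕ) : ℝ)) ^ 2 with hc4def
  have hc40 : 0 < c4 := by rw [hc4def]; positivity
  have hrfib0 : (0:ℝ) < ((r + 1 : ℕ) : ℝ) := by exact_mod_cast Nat.succ_pos r
  set e0 : ℝ := c4 ^ q / ((r + 1 : ℕ) : ℝ) with he0def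
  have he00 : 0 < e0 := by
    rw [he0def]
    exact div_pos (Real.rpow_pos_of_pos hc40 q) hrfib0
  refine ⟨e0, he00, ?_⟩
  intro a b ha hb haa hbb t ht
  set s := (lists m t).filter (AdmL A) with hs
  set T := (Finset.Icc 1 (2 * r)).sigma
    (fun k => (lists m (t + k)).filter (fun K => AdmL A (a ++ (K ++ b)))) with hT
  have hchoice : ∀ w ∈ s, ∃ p : ℕ × List (Fin m) × ℕ,
      1 ≤ p.1 ∧ p.1 ≤ 2 * r ∧ p.2.1.length = t + p.1 ∧ AdmL A (a ++ (p.2.1 ++ b)) ∧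
      c4 * (matNorm (PL M a) * (matNorm (PL M w) * matNorm (PL M b))) ≤
        matNorm (PL M (a ++ (p.2.1 ++ b))) ∧
      p.2.2 ≤ r ∧ (p.2.1.drop p.2.2).take t = w := by
    intro w hw
    obtain ⟨hwmem, hwadm⟩ := Finset.mem_filter.1 hw
    have hwlen := mem_lists.1 hwmem
    have hwne : w ≠ [] := by intro h; rw [h] at hwlen; simp at hwlen; omega
    obtain ⟨u2, hu21, hu22, hu2adm, hu2ineq⟩ :=
      exists_bridge_word hm hd hnn hH2 hc hwne hb hwadm hbb
    have hw'ne : w ++ (u2 ++ b) ≠ [] := by simp [hwne]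
    obtain ⟨u1, hu11, hu12, hu1adm, hu1ineq⟩ :=
      exists_bridge_word hm hd hnn hH2 hc ha hw'ne haa hu2adm
    set K := u1 ++ (w ++ u2) with hK
    have hKlen : K.length = t + (u1.length + u2.length) := by
      rw [hK]; simp [hwlen]; omega
    have hbig : a ++ (K ++ b) = a ++ (u1 ++ (w ++ (u2 ++ b))) := by
      rw [hK]; simp [List.append_assoc]
    have hKadm : AdmL A (a ++ (K ++ b)) := by rw [hbig]; exact hu1adm
    have hrecov : (K.drop u1.length).take t = w := by
      rw [hK]
      rw [List.drop_left]
      exact List.take_left' hwlen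
    have hineq : c4 * (matNorm (PL M a) * (matNorm (PL M w) * matNorm (PL M b))) ≤
        matNorm (PL M (a ++ (K ++ b))) := by
      rw [hbig, hc4def, div_mul_eq_mul_div, div_le_iff₀ (by positivity)]
      have h1 : c * (matNorm (PL M w) * matNorm (PL M b)) ≤
          ((r * m ^ r : ℕ) : ℝ) * matNorm (PL M (w ++ (u2 ++ b))) := hu2ineq
      have h2 : c * (matNorm (PL M a) * matNorm (PL M (w ++ (u2 ++ b)))) ≤
          ((r * m ^ r : ℕ) : ℝ) * matNorm (PL M (a ++ (u1 ++ (w ++ (u2 ++ b))))) :=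
        hu1ineq
      have hca : 0 ≤ c * matNorm (PL M a) :=
        mul_nonneg hcpos.le (norm_PL_nonneg hnn a)
      calc c ^ 2 * (matNorm (PL M a) * (matNorm (PL M w) * matNorm (PL M b)))
          = (c * matNorm (PL M a)) * (c * (matNorm (PL M w) * matNorm (PL M b))) := by
            ring
        _ ≤ (c * matNorm (PL M a)) *
            (((r * m ^ r : ℕ) : ℝ) * matNorm (PL M (w ++ (u2 ++ b)))) :=
            mul_le_mul_of_nonneg_left h1 hca
        _ = ((r * m ^ r : ℕ) : ℝ) *
            (c * (matNorm (PL M a) * matNorm (PL M (w ++ (u2 ++ b))))) := by ring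
        _ ≤ ((r * m ^ r : ℕ) : ℝ) * (((r * m ^ r : ℕ) : ℝ) *
            matNorm (PL M (a ++ (u1 ++ (w ++ (u2 ++ b)))))) :=
            mul_le_mul_of_nonneg_left h2 hN0.le
        _ = matNorm (PL M (a ++ (u1 ++ (w ++ (u2 ++ b))))) *
            ((r * m ^ r : ℕ) : ℝ) ^ 2 := by ring
    refine ⟨(u1.length + u2.length, K, u1.length), ?_, ?_, ?_, ?_, ?_, ?_, ?_⟩ <;>
      dsimp only
    · omega
    · omega
    · exact hKlen
    · exact hKadm
    · exact hineq
    · omega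
    · exact hrecov
  set P : List (Fin m) → ℕ × List (Fin m) × ℕ := fun w =>
    if h : w ∈ s then Classical.choose (hchoice w h) else (1, [], 0) with hPdef
  have hPgood : ∀ w ∈ s, 1 ≤ (P w).1 ∧ (P w).1 ≤ 2 * r ∧
      (P w).2.1.length = t + (P w).1 ∧ AdmL A (a ++ ((P w).2.1 ++ b)) ∧
      c4 * (matNorm (PL M a) * (matNorm (PL M w) * matNorm (PL M b))) ≤
        matNorm (PL M (a ++ ((P w).2.1 ++ b))) ∧
      (P w).2.2 ≤ r ∧ ((P w).2.1.drop (P w).2.2).take t = w := by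
    intro w hw
    rw [hPdef]
    simp only [dif_pos hw]
    exact Classical.choose_spec (hchoice w hw)
  set g : List (Fin m) → Σ _ : ℕ, List (Fin m) := fun w => ⟨(P w).1, (P w).2.1⟩ with hgdef
  have hmaps : ∀ w ∈ s, g w ∈ T := by
    intro w hw
    obtain ⟨h1, h2, h3, h4, _⟩ := hPgood w hw
    exact Finset.mem_sigma.2 ⟨Finset.mem_Icc.2 ⟨h1, h2⟩,
      Finset.mem_filter.2 ⟨mem_lists.2 h3, h4⟩⟩
  have hfibcard : ∀ p ∈ T, (s.filter fun w => g w = p).card ≤ r + 1 := by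
    intro p _
    have hcard := fiber_card_le s g (fun w => (⟨min (P w).2.2 r, by omega⟩ : Fin (r + 1)))
      ?_ p
    · calc (s.filter fun w => g w = p).card ≤ Fintype.card (Fin (r + 1)) := hcard
        _ = r + 1 := by simp
    · intro x hx y hy hgxy hexy
      obtain ⟨_, _, _, _, _, hx6, hx7⟩ := hPgood x hx
      obtain ⟨_, _, _, _, _, hy6, hy7⟩ := hPgood y hy
      have hk1 : (P x).2.2 = (P y).2.2 := by
        have h3 : min (P x).2.2 r = min (P y).2.2 r := congrArg Fin.val hexy
        omega
      rw [hgdef] at hgxy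
      dsimp only at hgxy
      have hKeq : (P x).2.1 = (P y).2.1 := by
        have h2 := (Sigma.mk.inj_iff.1 hgxy).2
        exact eq_of_heq h2
      rw [← hx7, ← hy7, hKeq, hk1]
  have hterm : ∀ w ∈ s, c4 ^ q *
      (matNorm (PL M a) ^ q * (matNorm (PL M w) ^ q * matNorm (PL M b) ^ q)) ≤
      (fun p : Σ _ : ℕ, List (Fin m) => matNorm (PL M (a ++ (p.2 ++ b))) ^ q) (g w) := by
    intro w hw
    obtain ⟨_, _, _, _, h5, _⟩ := hPgood w hw
    have hwnn : 0 ≤ matNorm (PL M a) * (matNorm (PL M w) * matNorm (PL M b)) :=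
      mul_nonneg (norm_PL_nonneg hnn a)
        (mul_nonneg (norm_PL_nonneg hnn w) (norm_PL_nonneg hnn b))
    calc c4 ^ q * (matNorm (PL M a) ^ q * (matNorm (PL M w) ^ q * matNorm (PL M b) ^ q))
        = (c4 * (matNorm (PL M a) * (matNorm (PL M w) * matNorm (PL M b)))) ^ q := by
          rw [Real.mul_rpow hc40.le hwnn,
            Real.mul_rpow (norm_PL_nonneg hnn a)
              (mul_nonneg (norm_PL_nonneg hnn w) (norm_PL_nonneg hnn b)),
            Real.mul_rpow (norm_PL_nonneg hnn w) (norm_PL_nonneg hnn b)]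
      _ ≤ matNorm (PL M (a ++ ((P w).2.1 ++ b))) ^ q :=
          Real.rpow_le_rpow (mul_nonneg hc40.le hwnn) h5 hq
  have hSLs : SL A M q t = ∑ w ∈ s, matNorm (PL M w) ^ q := by rw [hs]; rfl
  have hfib := sum_le_fiber s T g hmaps
    (fun p : Σ _ : ℕ, List (Fin m) => matNorm (PL M (a ++ (p.2 ++ b))) ^ q)
    (fun p _ => term_nonneg hnn q _) (r + 1) hfibcard
  have hTsum : ∑ p ∈ T, matNorm (PL M (a ++ (p.2 ++ b))) ^ q =
      ∑ k ∈ Finset.Icc 1 (2 * r), ∑ l ∈ (lists m (t + k)).filter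
        (fun l => AdmL A (a ++ (l ++ b))), matNorm (PL M (a ++ (l ++ b))) ^ q := by
    rw [hT, Finset.sum_sigma]
  have hsum1 : c4 ^ q * (matNorm (PL M a) ^ q * matNorm (PL M b) ^ q * SL A M q t) ≤
      ((r + 1 : ℕ) : ℝ) * ∑ p ∈ T, matNorm (PL M (a ++ (p.2 ++ b))) ^ q := by
    calc c4 ^ q * (matNorm (PL M a) ^ q * matNorm (PL M b) ^ q * SL A M q t)
        = ∑ w ∈ s, c4 ^ q *
            (matNorm (PL M a) ^ q * (matNorm (PL M w) ^ q * matNorm (PL M b) ^ q)) := by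
          rw [hSLs, Finset.mul_sum, Finset.mul_sum]
          refine Finset.sum_congr rfl fun w _ => ?_
          ring
      _ ≤ ∑ w ∈ s, (fun p : Σ _ : ℕ, List (Fin m) =>
            matNorm (PL M (a ++ (p.2 ++ b))) ^ q) (g w) := Finset.sum_le_sum hterm
      _ ≤ ((r + 1 : ℕ) : ℝ) * ∑ p ∈ T, matNorm (PL M (a ++ (p.2 ++ b))) ^ q := by
          exact_mod_cast hfib
  rw [← hTsum]
  rw [he0def, div_mul_eq_mul_div, div_le_iff₀ hrfib0]
  calc c4 ^ q * (matNorm (PL M a) ^ q * matNorm (PL M b) ^ q * SL A M q t)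
      ≤ ((r + 1 : ℕ) : ℝ) * ∑ p ∈ T, matNorm (PL M (a ++ (p.2 ++ b))) ^ q := hsum1
    _ = (∑ p ∈ T, matNorm (PL M (a ++ (p.2 ++ b))) ^ q) * ((r + 1 : ℕ) : ℝ) := by ring

lemma sum_append_eq (hm : 0 < m) {n ℓ : ℕ} (I : Fin n → Fin m) (q : ℝ) :
    ∑ J ∈ Finset.univ.filter (fun J : Fin ℓ → Fin m => Adm A (Fin.append I J)),
        matNorm (MprodW M (Fin.append I J)) ^ q
      = ∑ l ∈ (lists m ℓ).filter (fun l => AdmL A (List.ofFn I ++ l)),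
          matNorm (PL M (List.ofFn I ++ l)) ^ q := by
  rw [← sum_ofFn_eq hm (fun J : Fin ℓ → Fin m => Adm A (Fin.append I J))
      (fun l => AdmL A (List.ofFn I ++ l)) ?_
      (fun l => matNorm (PL M (List.ofFn I ++ l)) ^ q)]
  · refine Finset.sum_congr rfl fun J _ => ?_
    have h : MprodW M (Fin.append I J) = PL M (List.ofFn I ++ List.ofFn J) := by
      show PL M (List.ofFn (Fin.append I J)) = _
      rw [List.ofFn_fin_append]
    rw [h]
  · intro J
    rw [adm_iff_admL, List.ofFn_fin_append]

lemma sum_prepend_eq (hm : 0 < m) {n ℓ : ℕ} (I : Fin n → Fin m) (q : ℝ) :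
    ∑ J ∈ Finset.univ.filter (fun J : Fin ℓ → Fin m => Adm A (Fin.append J I)),
        matNorm (MprodW M (Fin.append J I)) ^ q
      = ∑ l ∈ (lists m ℓ).filter (fun l => AdmL A (l ++ List.ofFn I)),
          matNorm (PL M (l ++ List.ofFn I)) ^ q := by
  rw [← sum_ofFn_eq hm (fun J : Fin ℓ → Fin m => Adm A (Fin.append J I))
      (fun l => AdmL A (l ++ List.ofFn I)) ?_
      (fun l => matNorm (PL M (l ++ List.ofFn I)) ^ q)]
  · refine Finset.sum_congr rfl fun J _ => ?_
    have h : MprodW M (Fin.append J I) = PL M (List.ofFn J ++ List.ofFn I) := by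
      show PL M (List.ofFn (Fin.append J I)) = _
      rw [List.ofFn_fin_append]
    rw [h]
  · intro J
    rw [adm_iff_admL, List.ofFn_fin_append]

lemma sum_mid_eq (hm : 0 < m) {n ℓ w : ℕ} (I : Fin n → Fin m) (J : Fin ℓ → Fin m) (q : ℝ) :
    ∑ K ∈ Finset.univ.filter
        (fun K : Fin w → Fin m => Adm A (Fin.append (Fin.append I K) J)),
        matNorm (MprodW M (Fin.append (Fin.append I K) J)) ^ q
      = ∑ l ∈ (lists m w).filter
          (fun l => AdmL A (List.ofFn I ++ (l ++ List.ofFn J))),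
          matNorm (PL M (List.ofFn I ++ (l ++ List.ofFn J))) ^ q := by
  rw [← sum_ofFn_eq hm
      (fun K : Fin w → Fin m => Adm A (Fin.append (Fin.append I K) J))
      (fun l => AdmL A (List.ofFn I ++ (l ++ List.ofFn J))) ?_
      (fun l => matNorm (PL M (List.ofFn I ++ (l ++ List.ofFn J))) ^ q)]
  · refine Finset.sum_congr rfl fun K _ => ?_
    have h : MprodW M (Fin.append (Fin.append I K) J)
        = PL M (List.ofFn I ++ (List.ofFn K ++ List.ofFn J)) := by
      show PL M (List.ofFn (Fin.append (Fin.append I K) J)) = _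
      rw [List.ofFn_fin_append, List.ofFn_fin_append, List.append_assoc]
    rw [h]
  · intro K
    rw [adm_iff_admL, List.ofFn_fin_append, List.ofFn_fin_append, List.append_assoc]

lemma ofFn_ne_nil {n : ℕ} (hn : 1 ≤ n) (I : Fin n → Fin m) : List.ofFn I ≠ [] := by
  intro h
  have := congrArg List.length h
  simp at this
  omega

end SES


open SES in
set_option maxHeartbeats 1000000 in
/-- Lemma 3.1: the three comparability estimates for `s_n(q)` in the
nonnegative case under (H1)-(H2), for fixed `q > 0`. -/
theorem sSumW_three_estimates
    (m d : ℕ) (hm : 2 ≤ m) (hd : 1 ≤ d)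
    (A : Matrix (Fin m) (Fin m) ℕ) (hA01 : ZeroOne A) (hAprim : Primitive A)
    (M : Fin m → Matrix (Fin d) (Fin d) ℝ) (hnn : NonnegW M)
    (r : ℕ) (hr : 1 ≤ r) (hH2 : H2At A M r)
    (q : ℝ) (hq : 0 < q) :
    (∃ C : ℝ, 1 ≤ C ∧ ∀ ℓ : ℕ, 1 ≤ ℓ →
      C⁻¹ * sSumW A M q ℓ ≤ sSumW A M q (ℓ + 1) ∧
      sSumW A M q (ℓ + 1) ≤ C * sSumW A M q ℓ) ∧
    (∃ C : ℝ, 1 ≤ C ∧ ∀ n ℓ : ℕ, 1 ≤ n → 1 ≤ ℓ → ∀ I : Fin n → Fin m, Adm A I →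
      (C⁻¹ * (matNorm (MprodW M I) ^ q * sSumW A M q ℓ) ≤
          ∑ J ∈ Finset.univ.filter (fun J : Fin ℓ → Fin m => Adm A (Fin.append I J)),
            matNorm (MprodW M (Fin.append I J)) ^ q ∧
        ∑ J ∈ Finset.univ.filter (fun J : Fin ℓ → Fin m => Adm A (Fin.append I J)),
            matNorm (MprodW M (Fin.append I J)) ^ q ≤
          C * (matNorm (MprodW M I) ^ q * sSumW A M q ℓ)) ∧
      (C⁻¹ * (matNorm (MprodW M I) ^ q * sSumW A M q ℓ) ≤
          ∑ J ∈ Finset.univ.filter (fun J : Fin ℓ → Fin m => Adm A (Fin.append J I)),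
            matNorm (MprodW M (Fin.append J I)) ^ q ∧
        ∑ J ∈ Finset.univ.filter (fun J : Fin ℓ → Fin m => Adm A (Fin.append J I)),
            matNorm (MprodW M (Fin.append J I)) ^ q ≤
          C * (matNorm (MprodW M I) ^ q * sSumW A M q ℓ))) ∧
    (∃ C : ℝ, 1 ≤ C ∧ ∀ n ℓ : ℕ, 1 ≤ n → 1 ≤ ℓ →
      ∀ I : Fin n → Fin m, Adm A I → ∀ J : Fin ℓ → Fin m, Adm A J →
      ∀ i : ℕ, n + ℓ < i →
        C⁻¹ * (matNorm (MprodW M I) ^ q * matNorm (MprodW M J) ^ q * sSumW A M q (i - n - ℓ)) ≤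
            (∑ k ∈ Finset.Icc 1 (2 * r),
              ∑ K ∈ Finset.univ.filter
                  (fun K : Fin (i + k - n - ℓ) → Fin m => Adm A (Fin.append (Fin.append I K) J)),
                matNorm (MprodW M (Fin.append (Fin.append I K) J)) ^ q) ∧
        (∑ k ∈ Finset.Icc 1 (2 * r),
          ∑ K ∈ Finset.univ.filter
              (fun K : Fin (i + k - n - ℓ) → Fin m => Adm A (Fin.append (Fin.append I K) J)),
            matNorm (MprodW M (Fin.append (Fin.append I K) J)) ^ q) ≤
          C * (matNorm (MprodW M I) ^ q * matNorm (MprodW M J) ^ q * sSumW A M q (i - n - ℓ))) := by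
  classical
  have hm0 : 0 < m := by omega
  have hd0 : 0 < d := hd
  obtain ⟨c, hcpos, hc⟩ := exists_c (A := A) (M := M) hm0 hd0 hH2
  have hD1 : (1:ℝ) ≤ Dc M := one_le_Dc hnn
  have hN0 : (0:ℝ) < ((r * m ^ r : ℕ) : ℝ) := by
    have : 1 ≤ r * m ^ r := Nat.one_le_iff_ne_zero.2 (by positivity)
    have := (Nat.one_le_cast (α := ℝ)).2 this
    linarith
  set c0 : ℝ := min (c / (((r * m ^ r : ℕ) : ℝ) * Dc M ^ r)) 1 with hc0def
  have hc00 : 0 < c0 := lt_min (by positivity) one_pos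
  have hc01 : c0 ≤ 1 := min_le_right _ _
  have hL1R : ∀ a : List (Fin m), a ≠ [] → AdmL A a → ∃ i : Fin m, AdmL A (a ++ [i]) ∧
      c0 * matNorm (PL M a) ≤ matNorm (PL M (a ++ [i])) := by
    intro a ha haa
    obtain ⟨i, h1, h2⟩ := exists_extend_letter hm0 hd0 hnn hr hH2 hcpos hc ha haa
    exact ⟨i, h1, le_trans (mul_le_mul_of_nonneg_right (min_le_left _ _)
      (norm_PL_nonneg hnn a)) h2⟩
  have hL1L : ∀ a : List (Fin m), a ≠ [] → AdmL A a → ∃ i : Fin m, AdmL A (i :: a) ∧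
      c0 * matNorm (PL M a) ≤ matNorm (PL M (i :: a)) := by
    intro a ha haa
    obtain ⟨i, h1, h2⟩ := exists_prepend_letter hm0 hd0 hnn hr hH2 hcpos hc ha haa
    exact ⟨i, h1, le_trans (mul_le_mul_of_nonneg_right (min_le_left _ _)
      (norm_PL_nonneg hnn a)) h2⟩
  set K1 : ℝ := max 1 (((m + 1 : ℕ) : ℝ) * Dc M ^ q) with hK1def
  have hK1 : 1 ≤ K1 := le_max_left _ _
  have hstep : ∀ ℓ : ℕ, 1 ≤ ℓ → SL A M q (ℓ + 1) ≤ K1 * SL A M q ℓ := by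
    intro ℓ hℓ
    refine (SL_succ_le hnn hq.le ℓ hℓ).trans ?_
    exact mul_le_mul_of_nonneg_right (le_max_right _ _) (SL_nonneg hnn q ℓ)
  set K2 : ℝ := (c0⁻¹) ^ q with hK2def
  have hK2pos : 0 < K2 := Real.rpow_pos_of_pos (by positivity) q
  have hK2 : ∀ ℓ : ℕ, 1 ≤ ℓ → SL A M q ℓ ≤ K2 * SL A M q (ℓ + 1) :=
    fun ℓ hℓ => SL_le_succ hnn hc00 hL1R hq.le ℓ hℓ
  obtain ⟨eR, heR0, heR⟩ := TR_lower hm0 hd0 hnn hr hH2 hcpos hc hc00 hc01 hL1R hq.le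
  obtain ⟨eL, heL0, heL⟩ := TL_lower hm0 hd0 hnn hr hH2 hcpos hc hc00 hc01 hL1L hq.le
  obtain ⟨e3, he30, he3⟩ := III_lower hm0 hd0 hnn hr hH2 hcpos hc hq.le
  refine ⟨⟨max K1 K2, hK1.trans (le_max_left _ _), ?_⟩,
    ⟨max 1 (max eR⁻¹ eL⁻¹), le_max_left _ _, ?_⟩,
    ⟨max 1 (max e3⁻¹ (((2 * r : ℕ) : ℝ) * K1 ^ (2 * r))), le_max_left _ _, ?_⟩⟩
  · -- part (i)
    intro ℓ hℓ
    have hCpos : 0 < max K1 K2 := lt_of_lt_of_le one_pos (hK1.trans (le_max_left _ _))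
    simp only [sSumW_eq_SL hm0]
    constructor
    · have h1 : SL A M q ℓ ≤ max K1 K2 * SL A M q (ℓ + 1) :=
        (hK2 ℓ hℓ).trans (mul_le_mul_of_nonneg_right (le_max_right _ _)
          (SL_nonneg hnn q (ℓ + 1)))
      calc (max K1 K2)⁻¹ * SL A M q ℓ
          ≤ (max K1 K2)⁻¹ * (max K1 K2 * SL A M q (ℓ + 1)) :=
            mul_le_mul_of_nonneg_left h1 (inv_nonneg.2 hCpos.le)
        _ = SL A M q (ℓ + 1) := by field_simp
    · exact (hstep ℓ hℓ).trans (mul_le_mul_of_nonneg_right (le_max_left _ _)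
        (SL_nonneg hnn q ℓ))
  · -- part (ii)
    intro n ℓ hn hℓ I hI
    have ha : List.ofFn I ≠ [] := ofFn_ne_nil hn I
    have haa : AdmL A (List.ofFn I) := (adm_iff_admL A I).1 hI
    have hC2pos : (0:ℝ) < max 1 (max eR⁻¹ eL⁻¹) := lt_of_lt_of_le one_pos (le_max_left _ _)
    have hCinvR : (max 1 (max eR⁻¹ eL⁻¹))⁻¹ ≤ eR := by
      have h1 : eR⁻¹ ≤ max 1 (max eR⁻¹ eL⁻¹) := le_trans (le_max_left _ _) (le_max_right _ _)
      calc (max 1 (max eR⁻¹ eL⁻¹))⁻¹ ≤ (eR⁻¹)⁻¹ :=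
            inv_anti₀ (by positivity) h1
        _ = eR := inv_inv eR
    have hCinvL : (max 1 (max eR⁻¹ eL⁻¹))⁻¹ ≤ eL := by
      have h1 : eL⁻¹ ≤ max 1 (max eR⁻¹ eL⁻¹) := le_trans (le_max_right _ _) (le_max_right _ _)
      calc (max 1 (max eR⁻¹ eL⁻¹))⁻¹ ≤ (eL⁻¹)⁻¹ :=
            inv_anti₀ (by positivity) h1
        _ = eL := inv_inv eL
    have hXnn : 0 ≤ matNorm (PL M (List.ofFn I)) ^ q * SL A M q ℓ :=
      mul_nonneg (term_nonneg hnn q _) (SL_nonneg hnn q ℓ)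
    simp only [sSumW_eq_SL hm0]
    rw [sum_append_eq hm0 I q, sum_prepend_eq hm0 I q]
    have hXeq : matNorm (MprodW M I) = matNorm (PL M (List.ofFn I)) := rfl
    rw [hXeq]
    refine ⟨⟨?_, ?_⟩, ?_, ?_⟩
    · calc (max 1 (max eR⁻¹ eL⁻¹))⁻¹ * (matNorm (PL M (List.ofFn I)) ^ q * SL A M q ℓ)
          ≤ eR * (matNorm (PL M (List.ofFn I)) ^ q * SL A M q ℓ) :=
            mul_le_mul_of_nonneg_right hCinvR hXnn
        _ ≤ _ := heR (List.ofFn I) ha haa ℓ hℓ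
    · refine (TR_upper hnn hq.le ha ℓ).trans ?_
      exact le_mul_of_one_le_left hXnn (le_max_left _ _)
    · calc (max 1 (max eR⁻¹ eL⁻¹))⁻¹ * (matNorm (PL M (List.ofFn I)) ^ q * SL A M q ℓ)
          ≤ eL * (matNorm (PL M (List.ofFn I)) ^ q * SL A M q ℓ) :=
            mul_le_mul_of_nonneg_right hCinvL hXnn
        _ ≤ _ := heL (List.ofFn I) ha haa ℓ hℓ
    · refine (TL_upper hnn hq.le ha ℓ).trans ?_
      exact le_mul_of_one_le_left hXnn (le_max_left _ _)
  · -- part (iii)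
    intro n ℓ hn hℓ I hI J hJ i hi
    have ha : List.ofFn I ≠ [] := ofFn_ne_nil hn I
    have hb : List.ofFn J ≠ [] := ofFn_ne_nil hℓ J
    have haa : AdmL A (List.ofFn I) := (adm_iff_admL A I).1 hI
    have hbb : AdmL A (List.ofFn J) := (adm_iff_admL A J).1 hJ
    set t : ℕ := i - n - ℓ with htdef
    have ht : 1 ≤ t := by omega
    have hsum_eq : (∑ k ∈ Finset.Icc 1 (2 * r),
        ∑ K ∈ Finset.univ.filter
            (fun K : Fin (i + k - n - ℓ) → Fin m => Adm A (Fin.append (Fin.append I K) J)),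
          matNorm (MprodW M (Fin.append (Fin.append I K) J)) ^ q)
        = ∑ k ∈ Finset.Icc 1 (2 * r), ∑ l ∈ (lists m (t + k)).filter
            (fun l => AdmL A (List.ofFn I ++ (l ++ List.ofFn J))),
            matNorm (PL M (List.ofFn I ++ (l ++ List.ofFn J))) ^ q := by
      refine Finset.sum_congr rfl fun k hk => ?_
      rw [sum_mid_eq hm0 I J q]
      have hik : i + k - n - ℓ = t + k := by omega
      rw [hik]
    rw [hsum_eq]
    simp only [sSumW_eq_SL hm0]
    have hXeq : matNorm (MprodW M I) = matNorm (PL M (List.ofFn I)) := rfl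
    have hYeq : matNorm (MprodW M J) = matNorm (PL M (List.ofFn J)) := rfl
    rw [hXeq, hYeq]
    have hXnn : 0 ≤ matNorm (PL M (List.ofFn I)) ^ q * matNorm (PL M (List.ofFn J)) ^ q *
        SL A M q t :=
      mul_nonneg (mul_nonneg (term_nonneg hnn q _) (term_nonneg hnn q _))
        (SL_nonneg hnn q t)
    have hCinv3 : (max 1 (max e3⁻¹ (((2 * r : ℕ) : ℝ) * K1 ^ (2 * r))))⁻¹ ≤ e3 := by
      have h1 : e3⁻¹ ≤ max 1 (max e3⁻¹ (((2 * r : ℕ) : ℝ) * K1 ^ (2 * r))) :=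
        le_trans (le_max_left _ _) (le_max_right _ _)
      calc (max 1 (max e3⁻¹ (((2 * r : ℕ) : ℝ) * K1 ^ (2 * r))))⁻¹ ≤ (e3⁻¹)⁻¹ :=
            inv_anti₀ (by positivity) h1
        _ = e3 := inv_inv e3
    constructor
    · calc (max 1 (max e3⁻¹ (((2 * r : ℕ) : ℝ) * K1 ^ (2 * r))))⁻¹ *
          (matNorm (PL M (List.ofFn I)) ^ q * matNorm (PL M (List.ofFn J)) ^ q *
            SL A M q t)
          ≤ e3 * (matNorm (PL M (List.ofFn I)) ^ q * matNorm (PL M (List.ofFn J)) ^ q *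
              SL A M q t) := mul_le_mul_of_nonneg_right hCinv3 hXnn
        _ ≤ _ := he3 (List.ofFn I) (List.ofFn J) ha hb haa hbb t ht
    · refine (III_upper hm0 hnn hq.le hK1 hstep ha hb (2 * r) ht).trans ?_
      refine mul_le_mul_of_nonneg_right ?_ hXnn
      push_cast
      exact le_trans (le_max_right _ _) (le_max_right 1 _)
end
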